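/- arXiv:2601.09154 — 3 statements merged into one kernel-verified Lean document; each statement's English description precedes it below -/
import Mathlib

section
/- Let α be a real number and x a real number with |x| < 1. Define a sequence (u_n) by u_0 = 1, u_1 = −α², and for n ≥ 1, u_{n+1} = ((−2α² + 4n² − 3n + 1)/(2n² + 3n + 1)) u_n − (2(n−1)(n−1−α)(n−1+α)/(n(n+1)(2n+1))) u_{n-1}. Then cos²(α · arcsin x) = ∑_{n=0}^∞ u_n x^{2n}, where the series equals F(α/2, −α/2; 1/2; x²)². -/
open scoped Nat

noncomputable def dcoef (β : ℝ) (k : ℕ) : ℝ :=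
  (ascPochhammer ℝ k).eval (β/2) * (ascPochhammer ℝ k).eval (-β/2) /
    ((ascPochhammer ℝ k).eval (1/2) * (k ! : ℝ))

lemma dcoef_zero (β : ℝ) : dcoef β 0 = 1 := by
  simp [dcoef]

lemma dcoef_one (β : ℝ) : dcoef β 1 = -(β^2)/2 := by
  simp only [dcoef, ascPochhammer_one, Polynomial.eval_X, Nat.factorial_one, Nat.cast_one]
  ring

lemma dcoef_rec (β : ℝ) (k : ℕ) :
    dcoef β (k+1) * ((2*(k:ℝ)+1)*(2*(k:ℝ)+2)) = ((2*(k:ℝ))^2 - β^2) * dcoef β k := by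
  have hP : 0 < (ascPochhammer ℝ k).eval (1/2 : ℝ) :=
    ascPochhammer_pos k _ (by norm_num)
  have hF : (0:ℝ) < (k ! : ℝ) := by positivity
  simp only [dcoef, ascPochhammer_succ_eval, Nat.factorial_succ, Nat.cast_mul]
  field_simp
  push_cast
  ring

lemma dcoef_bound (β : ℝ) : ∃ M : ℝ, 0 ≤ M ∧ ∀ k, |dcoef β k| ≤ M := by
  set k₀ : ℕ := ⌈β^2⌉₊ with hk₀
  set M : ℝ := ∑ i ∈ Finset.range (k₀ + 1), |dcoef β i| with hM
  have hM0 : 0 ≤ M := Finset.sum_nonneg fun i _ => abs_nonneg _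
  have hmono : ∀ k, k₀ ≤ k → |dcoef β (k+1)| ≤ |dcoef β k| := by
    intro k hk
    have hk' : β^2 ≤ (k:ℝ) := le_trans (Nat.le_ceil _) (by exact_mod_cast hk)
    have h1 : dcoef β (k+1) = ((2*(k:ℝ))^2 - β^2) * dcoef β k / ((2*(k:ℝ)+1)*(2*(k:ℝ)+2)) := by
      have h := dcoef_rec β k
      have hne : ((2*(k:ℝ)+1)*(2*(k:ℝ)+2)) ≠ 0 := by positivity
      field_simp
      linarith [h]
    rw [h1, abs_div, abs_mul]
    have hden : |(2*(k:ℝ)+1)*(2*(k:ℝ)+2)| = (2*(k:ℝ)+1)*(2*(k:ℝ)+2) := by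
      rw [abs_of_pos]; positivity
    rw [hden]
    rw [div_le_iff₀ (by positivity)]
    have hnum : |(2*(k:ℝ))^2 - β^2| ≤ (2*(k:ℝ)+1)*(2*(k:ℝ)+2) := by
      rw [abs_le]
      constructor <;> nlinarith [sq_nonneg (k:ℝ), sq_nonneg β]
    calc |(2*(k:ℝ))^2 - β^2| * |dcoef β k|
        ≤ ((2*(k:ℝ)+1)*(2*(k:ℝ)+2)) * |dcoef β k| :=
          mul_le_mul_of_nonneg_right hnum (abs_nonneg _)
      _ = |dcoef β k| * ((2*(k:ℝ)+1)*(2*(k:ℝ)+2)) := by ring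
  refine ⟨M, hM0, ?_⟩
  have hsmall : ∀ k, k ≤ k₀ → |dcoef β k| ≤ M :=
    fun k hk => Finset.single_le_sum (f := fun i => |dcoef β i|)
      (fun i _ => abs_nonneg _) (Finset.mem_range.mpr (Nat.lt_succ_of_le hk))
  have hbig : ∀ k, k₀ ≤ k → |dcoef β k| ≤ M := by
    intro k hk
    induction k, hk using Nat.le_induction with
    | base => exact hsmall k₀ le_rfl
    | succ n hn ih => exact le_trans (hmono n hn) ih
  intro k
  rcases le_total k k₀ with h | h
  · exact hsmall k h
  · exact hbig k h

lemma summable_cube_geom {s : ℝ} (hs0 : 0 < s) (hs1 : s < 1) :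
    Summable (fun k : ℕ => ((k:ℝ)+2)^3 * s^k) := by
  have hs : ‖s‖ < 1 := by rw [Real.norm_eq_abs, abs_of_pos hs0]; exact hs1
  have h3 := summable_pow_mul_geometric_of_norm_lt_one 3 hs
  have h2 := summable_pow_mul_geometric_of_norm_lt_one 2 hs
  have h1 := summable_pow_mul_geometric_of_norm_lt_one 1 hs
  have h0 := summable_geometric_of_lt_one hs0.le hs1
  have := (h3.add (h2.mul_left 6)).add ((h1.mul_left 12).add (h0.mul_left 8))
  refine this.congr fun k => ?_
  push_cast
  ring

/-- Master summability: coefficients bounded by `C (k+1)^3 r^(2k-2)` are summable. -/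
lemma summable_master {C r : ℝ} (hr0 : 0 < r) (hr1 : r < 1) (f : ℕ → ℝ)
    (hf : ∀ k, ‖f k‖ ≤ C * ((k:ℝ)+1)^3 * r^(2*k-2)) : Summable f := by
  have hs0 : 0 < r^2 := by positivity
  have hs1 : r^2 < 1 := by nlinarith
  apply Summable.of_norm_bounded ?_ hf
  rw [← summable_nat_add_iff 1]
  have hbase := (summable_cube_geom hs0 hs1).mul_left C
  refine hbase.congr fun k => ?_
  have hexp : 2*(k+1)-2 = 2*k := by omega
  rw [hexp, pow_mul]
  push_cast
  ring

lemma mul3_le {a b c A B C : ℝ} (ha : 0 ≤ a) (hb : 0 ≤ b) (hc : 0 ≤ c)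
    (hA : a ≤ A) (hB : b ≤ B) (hC : c ≤ C) : a*b*c ≤ A*B*C :=
  mul_le_mul (mul_le_mul hA hB hb (le_trans ha hA)) hC hc
    (mul_nonneg (le_trans ha hA) (le_trans hb hB))

lemma summable_u {r : ℝ} (hr0 : 0 < r) (hr1 : r < 1) {A : ℝ} (hA : 0 ≤ A) :
    Summable (fun k : ℕ => A*((k:ℝ)+1)^3*r^(2*k-2)) := by
  apply summable_master hr0 hr1
  intro k
  apply le_of_eq
  rw [Real.norm_eq_abs, abs_of_nonneg (by positivity)]

lemma dcoef_term_bound (β : ℝ) {M r : ℝ} (hM0 : 0 ≤ M) (hMb : ∀ k, |dcoef β k| ≤ M)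
    (hr0 : 0 < r) (hr1 : r ≤ 1) {c : ℕ → ℝ} {C : ℝ} (hc : ∀ k, 0 ≤ c k)
    (hcC : ∀ k, c k ≤ C*((k:ℝ)+1)^3) {y : ℝ} (hy : |y| ≤ r) {e : ℕ → ℕ}
    (he : ∀ k, 2*k-2 ≤ e k) (k : ℕ) :
    ‖dcoef β k * c k * y ^ (e k)‖ ≤ (M*C)*((k:ℝ)+1)^3 * r^(2*k-2) := by
  rw [Real.norm_eq_abs, abs_mul, abs_mul, abs_pow, abs_of_nonneg (hc k)]
  have hp1 : |y|^(e k) ≤ r^(e k) := pow_le_pow_left₀ (abs_nonneg y) hy _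
  have hp2 : r^(e k) ≤ r^(2*k-2) := pow_le_pow_of_le_one hr0.le hr1 (he k)
  calc |dcoef β k| * c k * |y|^(e k)
      ≤ M * (C*((k:ℝ)+1)^3) * r^(2*k-2) :=
        mul3_le (abs_nonneg _) (hc k) (pow_nonneg (abs_nonneg y) _)
          (hMb k) (hcC k) (le_trans hp1 hp2)
    _ = (M*C)*((k:ℝ)+1)^3 * r^(2*k-2) := by ring

lemma c_one_bound : ∀ k : ℕ, (1:ℝ) ≤ 1*((k:ℝ)+1)^3 := by
  intro k
  have h : (1:ℝ) ≤ ((k:ℝ)+1) := by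
    have : (0:ℝ) ≤ (k:ℝ) := by positivity
    linarith
  rw [one_mul]
  exact one_le_pow₀ h

lemma c_two_bound : ∀ k : ℕ, ((2*k : ℕ):ℝ) ≤ 2*((k:ℝ)+1)^3 := by
  intro k; push_cast
  have h0 : (0:ℝ) ≤ (k:ℝ) := by positivity
  nlinarith [h0, sq_nonneg ((k:ℝ)+1), pow_nonneg h0 3]

lemma c_four_bound : ∀ k : ℕ, ((2*k : ℕ):ℝ) * ((2*k-1 : ℕ):ℝ) ≤ 4*((k:ℝ)+1)^3 := by
  intro k
  have h1 : ((2*k-1 : ℕ):ℝ) ≤ ((2*k : ℕ):ℝ) := Nat.cast_le.mpr (Nat.sub_le _ _)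
  have h2 : (0:ℝ) ≤ ((2*k : ℕ):ℝ) := Nat.cast_nonneg _
  refine le_trans (mul_le_mul_of_nonneg_left h1 h2) ?_
  push_cast
  have h0 : (0:ℝ) ≤ (k:ℝ) := by positivity
  nlinarith [h0, sq_nonneg (k:ℝ), pow_nonneg h0 3]

lemma c_four_bound' : ∀ k : ℕ, (0:ℝ) ≤ ((2*k : ℕ):ℝ) * (((2*k : ℕ):ℝ) - 1) ∧
    ((2*k : ℕ):ℝ) * (((2*k : ℕ):ℝ) - 1) ≤ 4*((k:ℝ)+1)^3 := by
  intro k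
  have h0 : (0:ℝ) ≤ (k:ℝ) := by positivity
  constructor
  · rcases Nat.eq_zero_or_pos k with hk | hk
    · subst hk; norm_num
    · have : (1:ℝ) ≤ ((2*k:ℕ):ℝ) := by
        exact_mod_cast Nat.one_le_iff_ne_zero.mpr (by omega)
      push_cast at this ⊢
      nlinarith
  · push_cast
    nlinarith [h0, sq_nonneg (k:ℝ), pow_nonneg h0 3]

lemma summable_dcoef_mul (β : ℝ) {r : ℝ} (hr0 : 0 < r) (hr1 : r < 1) {c : ℕ → ℝ}
    {C : ℝ} (hc : ∀ k, 0 ≤ c k) (hcC : ∀ k, c k ≤ C*((k:ℝ)+1)^3) {y : ℝ}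
    (hy : |y| ≤ r) {e : ℕ → ℕ} (he : ∀ k, 2*k-2 ≤ e k) :
    Summable (fun k => dcoef β k * c k * y ^ (e k)) := by
  obtain ⟨M, hM0, hMb⟩ := dcoef_bound β
  have hC0 : 0 ≤ C := by
    have h0 := le_trans (hc 0) (hcC 0)
    norm_num at h0
    exact h0
  exact Summable.of_norm_bounded (summable_u hr0 hr1 (mul_nonneg hM0 hC0))
    (dcoef_term_bound β hM0 hMb hr0 hr1.le hc hcC hy he)

noncomputable def G0 (β : ℝ) (k : ℕ) (z : ℝ) : ℝ := dcoef β k * z ^ (2*k)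
noncomputable def G1 (β : ℝ) (k : ℕ) (z : ℝ) : ℝ :=
  dcoef β k * ((2*k : ℕ):ℝ) * z ^ (2*k-1)
noncomputable def G2 (β : ℝ) (k : ℕ) (z : ℝ) : ℝ :=
  dcoef β k * (((2*k : ℕ):ℝ) * ((2*k-1 : ℕ):ℝ)) * z ^ (2*k-1-1)

lemma hasDerivAt_G0 (β : ℝ) (k : ℕ) (y : ℝ) : HasDerivAt (G0 β k) (G1 β k y) y := by
  have h := (hasDerivAt_pow (2*k) y).const_mul (dcoef β k)
  have he : G1 β k y = dcoef β k * (((2*k : ℕ):ℝ) * y ^ (2*k-1)) := by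
    unfold G1; ring
  rw [he]
  exact h

lemma hasDerivAt_G1 (β : ℝ) (k : ℕ) (y : ℝ) : HasDerivAt (G1 β k) (G2 β k y) y := by
  have h := (hasDerivAt_pow (2*k-1) y).const_mul (dcoef β k * ((2*k : ℕ):ℝ))
  have he : G2 β k y = dcoef β k * ((2*k : ℕ):ℝ) * (((2*k-1 : ℕ):ℝ) * y ^ (2*k-1-1)) := by
    unfold G2; ring
  rw [he]
  exact h

set_option maxHeartbeats 2000000 in
lemma key (β y0 : ℝ) (hy0 : |y0| < 1) :
    Real.cos (β * Real.arcsin y0) = ∑' k : ℕ, dcoef β k * y0 ^ (2*k) := by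
  set r : ℝ := (1 + |y0|)/2 with hr
  have hy0n : 0 ≤ |y0| := abs_nonneg y0
  have hr0 : 0 < r := by rw [hr]; linarith
  have hr1 : r < 1 := by rw [hr]; linarith
  have hy0r : |y0| < r := by rw [hr]; linarith
  obtain ⟨M, hM0, hMb⟩ := dcoef_bound β
  set t : Set ℝ := Set.Ioo (-r) r with ht
  have hto : IsOpen t := isOpen_Ioo
  have htc : IsPreconnected t := (convex_Ioo _ _).isPreconnected
  have h0t : (0:ℝ) ∈ t := ⟨by linarith, hr0⟩
  have hyt : y0 ∈ t := ⟨neg_lt_of_abs_lt hy0r, lt_of_abs_lt hy0r⟩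
  have habsr : ∀ y ∈ t, |y| ≤ r := fun y hy => le_of_lt (abs_lt.mpr ⟨hy.1, hy.2⟩)
  -- summability of the three elementary series at points of t
  have S0 : ∀ y ∈ t, Summable (fun k => G0 β k y) := by
    intro y hy
    refine (summable_dcoef_mul β hr0 hr1 (c := fun _ => (1:ℝ)) (C := 1)
      (fun k => zero_le_one) c_one_bound (habsr y hy) (e := fun k => 2*k)
      (fun k => by show 2*k-2 ≤ 2*k; omega)).congr fun k => ?_
    unfold G0; ring
  have S1 : ∀ y ∈ t, Summable (fun k => G1 β k y) := by
    intro y hy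
    exact summable_dcoef_mul β hr0 hr1 (c := fun k => ((2*k:ℕ):ℝ))
      (fun k => Nat.cast_nonneg _) c_two_bound (habsr y hy)
      (e := fun k => 2*k-1) (fun k => by show 2*k-2 ≤ 2*k-1; omega)
  have S2 : ∀ y ∈ t, Summable (fun k => G2 β k y) := by
    intro y hy
    exact summable_dcoef_mul β hr0 hr1
      (c := fun k => ((2*k:ℕ):ℝ) * ((2*k-1:ℕ):ℝ)) (C := 4)
      (fun k => mul_nonneg (Nat.cast_nonneg _) (Nat.cast_nonneg _)) c_four_bound
      (habsr y hy) (e := fun k => 2*k-1-1) (fun k => by show 2*k-2 ≤ 2*k-1-1; omega)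
  -- uniform bounds for termwise differentiation
  have B1 : ∀ (k : ℕ), ∀ y ∈ t, ‖G1 β k y‖ ≤ (M*2)*((k:ℝ)+1)^3*r^(2*k-2) := by
    intro k y hy
    exact dcoef_term_bound β hM0 hMb hr0 hr1.le (fun k => Nat.cast_nonneg _)
      c_two_bound (habsr y hy) (e := fun k => 2*k-1) (fun k => by show 2*k-2 ≤ 2*k-1; omega) k
  have B2 : ∀ (k : ℕ), ∀ y ∈ t, ‖G2 β k y‖ ≤ (M*4)*((k:ℝ)+1)^3*r^(2*k-2) := by
    intro k y hy
    exact dcoef_term_bound β hM0 hMb hr0 hr1.le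
      (fun k => mul_nonneg (Nat.cast_nonneg _) (Nat.cast_nonneg _))
      c_four_bound (habsr y hy) (e := fun k => 2*k-1-1) (fun k => by show 2*k-2 ≤ 2*k-1-1; omega) k
  -- termwise differentiation of the sums
  have hG : ∀ y ∈ t, HasDerivAt (fun z => ∑' k, G0 β k z) (∑' k, G1 β k y) y := by
    intro y hy
    exact hasDerivAt_tsum_of_isPreconnected
      (summable_u hr0 hr1 (by positivity : (0:ℝ) ≤ M*2)) hto htc
      (fun n z hz => hasDerivAt_G0 β n z) B1 h0t (S0 0 h0t) hy
  have hG' : ∀ y ∈ t, HasDerivAt (fun z => ∑' k, G1 β k z) (∑' k, G2 β k y) y := by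
    intro y hy
    exact hasDerivAt_tsum_of_isPreconnected
      (summable_u hr0 hr1 (by positivity : (0:ℝ) ≤ M*4)) hto htc
      (fun n z hz => hasDerivAt_G1 β n z) B2 h0t (S1 0 h0t) hy
  -- the series identity : (∑ G2) = (y ∑ G1 - β² ∑ G0)/(1-y²) on t
  have hseries : ∀ y ∈ t, (∑' k, G2 β k y)
      = (y * (∑' k, G1 β k y) - β^2 * (∑' k, G0 β k y)) / (1 - y^2) := by
    intro y hy
    have hy2 : y^2 < 1 := by
      have h1 := hy.1; have h2 := hy.2
      nlinarith
    have hne : (1 - y^2) ≠ 0 := by nlinarith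
    have SA : Summable (fun k => G2 β (k+1) y) := (summable_nat_add_iff (f := fun n => G2 β n y) 1).mpr (S2 y hy)
    have SB : Summable (fun k => dcoef β k * (((2*k:ℕ):ℝ) * (((2*k:ℕ):ℝ)-1)) * y^(2*k)) :=
      summable_dcoef_mul β hr0 hr1 (fun k => (c_four_bound' k).1)
        (fun k => (c_four_bound' k).2) (habsr y hy) (e := fun k => 2*k)
        (fun k => by show 2*k-2 ≤ 2*k; omega)
    have SC : Summable (fun k => dcoef β k * ((2*k:ℕ):ℝ) * y^(2*k)) :=
      summable_dcoef_mul β hr0 hr1 (fun k => Nat.cast_nonneg _) c_two_bound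
        (habsr y hy) (e := fun k => 2*k) (fun k => by show 2*k-2 ≤ 2*k; omega)
    have SD : Summable (fun k => β^2 * (dcoef β k * y^(2*k))) := by
      refine Summable.mul_left _ (((S0 y hy)).congr fun k => ?_)
      unfold G0; rfl
    have e1 : (∑' k, G2 β k y) = ∑' k, G2 β (k+1) y := by
      have h0 : G2 β 0 y = 0 := by unfold G2; norm_num
      rw [Summable.tsum_eq_zero_add (S2 y hy), h0, zero_add]
    have e2 : (∑' k, G2 β k y) * y^2
        = ∑' k, dcoef β k * (((2*k:ℕ):ℝ) * (((2*k:ℕ):ℝ)-1)) * y^(2*k) := by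
      rw [← tsum_mul_right]
      refine tsum_congr fun k => ?_
      cases k with
      | zero => unfold G2; norm_num
      | succ k =>
        unfold G2
        rw [show 2*(k+1)-1-1 = 2*k from by omega,
          show 2*(k+1) = 2*k+2 from by omega,
          show 2*k+2-1 = 2*k+1 from by omega]
        push_cast
        ring
    have e3 : y * (∑' k, G1 β k y) = ∑' k, dcoef β k * ((2*k:ℕ):ℝ) * y^(2*k) := by
      rw [← tsum_mul_left]
      refine tsum_congr fun k => ?_
      cases k with
      | zero => unfold G1; norm_num
      | succ k =>
        unfold G1
        rw [show 2*(k+1)-1 = 2*k+1 from by omega,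
          show 2*(k+1) = 2*k+2 from by omega]
        push_cast
        ring
    have e4 : β^2 * (∑' k, G0 β k y) = ∑' k, β^2 * (dcoef β k * y^(2*k)) := by
      rw [← tsum_mul_left]
      exact tsum_congr fun k => rfl
    rw [eq_div_iff hne, mul_sub, mul_one, e2, e1, e3, e4, ← Summable.tsum_sub SA SB,
      ← Summable.tsum_sub SC SD]
    refine tsum_congr fun k => ?_
    unfold G2
    rw [show 2*(k+1)-1-1 = 2*k from by omega,
      show 2*(k+1) = 2*k+2 from by omega,
      show 2*k+2-1 = 2*k+1 from by omega]
    push_cast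
    linear_combination y^(2*k) * dcoef_rec β k
  -- the vector field
  set q : ℝ → ℝ := fun s => max (-r) (min r s) with hq
  set v : ℝ → ℝ × ℝ → ℝ × ℝ :=
    fun s p => (p.2, (q s * p.2 - β^2 * p.1) / (1 - (q s)^2)) with hv
  have hqt : ∀ s ∈ t, q s = s := by
    intro s hs
    rw [hq]
    simp only []
    rw [min_eq_right hs.2.le, max_eq_right hs.1.le]
  have hqabs : ∀ s, |q s| ≤ r := by
    intro s
    rw [abs_le]
    constructor
    · exact le_max_left _ _
    · exact max_le (by linarith) (min_le_left _ _)
  have hr2 : 0 < 1 - r^2 := by nlinarith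
  set Kr : ℝ := max 1 ((r + β^2)/(1-r^2)) with hKr
  have hKr0 : 0 ≤ Kr := le_trans zero_le_one (le_max_left _ _)
  set K : NNReal := Real.toNNReal Kr with hK
  have hKcoe : (K:ℝ) = Kr := Real.coe_toNNReal _ hKr0
  have hlip : ∀ s, LipschitzOnWith K (v s) Set.univ := by
    intro s
    suffices hw : LipschitzWith K (v s) by exact hw.lipschitzOnWith
    apply LipschitzWith.of_dist_le_mul
    intro p p'
    have hm : |q s| ≤ r := hqabs s
    have hm2 : (q s)^2 ≤ r^2 := sq_le_sq' (neg_le_of_abs_le hm) (le_of_abs_le hm)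
    have hD : 0 < 1 - (q s)^2 := by nlinarith
    have hD1 : 1 - r^2 ≤ 1 - (q s)^2 := by nlinarith
    have hdp : 0 ≤ dist p p' := dist_nonneg
    have hd1 : dist p.1 p'.1 ≤ dist p p' := by
      rw [Prod.dist_eq]; exact le_max_left _ _
    have hd2 : dist p.2 p'.2 ≤ dist p p' := by
      rw [Prod.dist_eq]; exact le_max_right _ _
    have hK1 : (1:ℝ) ≤ (K:ℝ) := by rw [hKcoe, hKr]; exact le_max_left _ _
    have hKK : (r + β^2)/(1-r^2) ≤ (K:ℝ) := by rw [hKcoe, hKr]; exact le_max_right _ _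
    rw [hv]
    simp only []
    rw [Prod.dist_eq]
    apply max_le
    · calc dist p.2 p'.2 ≤ dist p p' := hd2
        _ = 1 * dist p p' := (one_mul _).symm
        _ ≤ (K:ℝ) * dist p p' := mul_le_mul_of_nonneg_right hK1 hdp
    · rw [Real.dist_eq, div_sub_div_same, abs_div, abs_of_pos hD, div_le_iff₀ hD]
      have hN : |q s * p.2 - β^2 * p.1 - (q s * p'.2 - β^2 * p'.1)|
          ≤ (r + β^2) * dist p p' := by
        have h1 : q s * p.2 - β^2 * p.1 - (q s * p'.2 - β^2 * p'.1)
            = q s * (p.2 - p'.2) - β^2 * (p.1 - p'.1) := by ring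
        rw [h1]
        calc |q s * (p.2 - p'.2) - β^2 * (p.1 - p'.1)|
            ≤ |q s * (p.2 - p'.2)| + |β^2 * (p.1 - p'.1)| := abs_sub _ _
          _ = |q s| * |p.2 - p'.2| + β^2 * |p.1 - p'.1| := by
              rw [abs_mul, abs_mul, abs_of_nonneg (sq_nonneg β)]
          _ ≤ r * dist p p' + β^2 * dist p p' := by
              have e2 : |p.2 - p'.2| = dist p.2 p'.2 := (Real.dist_eq _ _).symm
              have e1 : |p.1 - p'.1| = dist p.1 p'.1 := (Real.dist_eq _ _).symm
              rw [e1, e2]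
              exact add_le_add
                (mul_le_mul hm hd2 dist_nonneg (le_trans (abs_nonneg _) hm))
                (mul_le_mul_of_nonneg_left hd1 (sq_nonneg β))
          _ = (r + β^2) * dist p p' := by ring
      calc |q s * p.2 - β^2 * p.1 - (q s * p'.2 - β^2 * p'.1)|
          ≤ (r + β^2) * dist p p' := hN
        _ = ((r + β^2)/(1-r^2)) * dist p p' * (1-r^2) := by field_simp
        _ ≤ (K:ℝ) * dist p p' * (1-r^2) :=
            mul_le_mul_of_nonneg_right
              (mul_le_mul_of_nonneg_right hKK hdp) hr2.le
        _ ≤ (K:ℝ) * dist p p' * (1 - (q s)^2) :=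
            mul_le_mul_of_nonneg_left hD1
              (mul_nonneg (le_trans zero_le_one hK1) hdp)
  -- the cosine side
  set θ : ℝ → ℝ := fun s => β * Real.arcsin s with hθ
  set y1 : ℝ → ℝ := fun s => Real.cos (θ s) with hy1
  set y2 : ℝ → ℝ := fun s => -β * Real.sin (θ s) / Real.sqrt (1 - s^2) with hy2
  have hcos : ∀ s ∈ t, HasDerivAt y1 (y2 s) s ∧
      HasDerivAt y2 ((s * y2 s - β^2 * y1 s)/(1-s^2)) s := by
    intro s hs
    have hs2 : s^2 < 1 := by
      have h1 := hs.1; have h2 := hs.2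
      nlinarith
    have hss : (0:ℝ) < 1 - s^2 := by nlinarith
    have hs1 : s ≠ 1 := by intro h; rw [h] at hs2; norm_num at hs2
    have hsm1 : s ≠ -1 := by intro h; rw [h] at hs2; norm_num at hs2
    set w : ℝ := Real.sqrt (1 - s^2) with hw
    have hw0 : 0 < w := Real.sqrt_pos.mpr hss
    have hw2 : w^2 = 1 - s^2 := Real.sq_sqrt hss.le
    have ha : HasDerivAt Real.arcsin (1 / w) s := Real.hasDerivAt_arcsin hsm1 hs1
    have hθd : HasDerivAt θ (β * (1/w)) s := ha.const_mul β
    constructor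
    · have h := (Real.hasDerivAt_cos (θ s)).comp s hθd
      have hval : y2 s = -Real.sin (θ s) * (β * (1/w)) := by
        simp only [hy2]
        rw [← hw]
        ring
      rw [hval]
      exact h
    · have hnum : HasDerivAt (fun z => -β * Real.sin (θ z))
          (-β * (Real.cos (θ s) * (β * (1/w)))) s :=
        ((Real.hasDerivAt_sin (θ s)).comp s hθd).const_mul (-β)
      have hinner : HasDerivAt (fun z : ℝ => 1 - z^2) (-(2*s)) s := by
        have h := (hasDerivAt_pow 2 s).const_sub 1
        have : ((2:ℕ):ℝ) * s^(2-1) = 2*s := by norm_num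
        rw [this] at h
        exact h
      have hden : HasDerivAt (fun z : ℝ => Real.sqrt (1 - z^2))
          (1/(2*w) * -(2*s)) s := by
        have h := (Real.hasDerivAt_sqrt (ne_of_gt hss)).comp s hinner
        exact h
      have hdiv : HasDerivAt y2 _ s := hnum.div hden (ne_of_gt hw0)
      convert hdiv using 1
      simp only [hy1, hy2]
      rw [← hw, ← hw2]
      field_simp
      ring
  -- assemble the two solutions
  set Cf : ℝ → ℝ × ℝ := fun s => (y1 s, y2 s) with hCf
  set Gf : ℝ → ℝ × ℝ := fun s => (∑' k, G0 β k s, ∑' k, G1 β k s) with hGf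
  have hCd : ∀ s ∈ t, HasDerivAt Cf (v s (Cf s)) s ∧ Cf s ∈ Set.univ := by
    intro s hs
    refine ⟨?_, trivial⟩
    have h2 := (hcos s hs).1.prodMk (hcos s hs).2
    have : v s (Cf s) = (y2 s, (s * y2 s - β^2 * y1 s)/(1-s^2)) := by
      rw [hv]
      simp only [hCf]
      rw [hqt s hs]
    rw [this]
    exact h2
  have hGd : ∀ s ∈ t, HasDerivAt Gf (v s (Gf s)) s ∧ Gf s ∈ Set.univ := by
    intro s hs
    refine ⟨?_, trivial⟩
    have h2 := (hG s hs).prodMk (hG' s hs)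
    have : v s (Gf s) = (∑' k, G1 β k s, ∑' k, G2 β k s) := by
      rw [hv]
      simp only [hGf]
      rw [hqt s hs, hseries s hs]
    rw [this]
    exact h2
  -- initial conditions agree
  have hinit : Cf 0 = Gf 0 := by
    have hsum0 : (∑' k, G0 β k 0) = 1 := by
      rw [tsum_eq_single 0 ?_]
      · unfold G0; rw [dcoef_zero]; norm_num
      · intro k hk
        unfold G0
        rw [zero_pow (by omega : 2*k ≠ 0), mul_zero]
    have hsum1 : (∑' k, G1 β k 0) = 0 := by
      have : (fun k => G1 β k 0) = fun _ => (0:ℝ) := by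
        funext k
        unfold G1
        cases k with
        | zero => norm_num
        | succ k =>
          rw [zero_pow (by omega : 2*(k+1)-1 ≠ 0), mul_zero]
      rw [this, tsum_zero]
    rw [hCf, hGf]
    simp only [hy1, hy2, hθ]
    rw [hsum0, hsum1]
    rw [Real.arcsin_zero, mul_zero, Real.cos_zero, Real.sin_zero]
    norm_num
  -- apply uniqueness
  have hEq := ODE_solution_unique_of_mem_Ioo (fun s _ => hlip s) h0t hCd hGd hinit
  have := hEq hyt
  have h1 : y1 y0 = ∑' k, G0 β k y0 := congrArg Prod.fst this
  rw [hy1] at h1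
  simp only [hθ] at h1
  rw [h1]
  exact tsum_congr fun k => rfl

lemma summable_dcoef_pow (β x : ℝ) (hx : |x| < 1) :
    Summable (fun k => dcoef β k * x^(2*k)) := by
  set r : ℝ := (1 + |x|)/2 with hr
  have hxn : 0 ≤ |x| := abs_nonneg x
  have hr0 : 0 < r := by rw [hr]; linarith
  have hr1 : r < 1 := by rw [hr]; linarith
  have hxr : |x| ≤ r := by rw [hr]; linarith
  refine (summable_dcoef_mul β hr0 hr1 (c := fun _ => (1:ℝ)) (C := 1)
    (fun k => zero_le_one) c_one_bound hxr (e := fun k => 2*k)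
    (fun k => by show 2*k-2 ≤ 2*k; omega)).congr fun k => ?_
  ring

/-- The Gaussian hypergeometric function `F(a,b;c;x)` of real parameters and argument. -/
noncomputable def hyperF (a b c x : ℝ) : ℝ :=
  ∑' k : ℕ, ((ascPochhammer ℝ k).eval a * (ascPochhammer ℝ k).eval b /
    ((ascPochhammer ℝ k).eval c * (k ! : ℝ))) * x ^ k

theorem squared_cos_mul_arcsin_recurrence
    (α x : ℝ) (hx : |x| < 1)
    (u : ℕ → ℝ)
    (hu0 : u 0 = 1)
    (hu1 : u 1 = -α ^ 2)
    (hrec : ∀ n : ℕ, 1 ≤ n →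
      u (n + 1) =
        ((-(2 * α ^ 2) + 4 * (n : ℝ) ^ 2 - 3 * (n : ℝ) + 1) /
          (2 * (n : ℝ) ^ 2 + 3 * (n : ℝ) + 1)) * u n
        - (2 * ((n : ℝ) - 1) * ((n : ℝ) - 1 - α) * ((n : ℝ) - 1 + α) /
          ((n : ℝ) * ((n : ℝ) + 1) * (2 * (n : ℝ) + 1))) * u (n - 1)) :
    Real.cos (α * Real.arcsin x) ^ 2 = ∑' n : ℕ, u n * x ^ (2 * n) ∧
    (∑' n : ℕ, u n * x ^ (2 * n)) = (hyperF (α / 2) (-α / 2) (1 / 2) (x ^ 2)) ^ 2 := by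
  -- identify u with the coefficients
  have hu' : ∀ n : ℕ, u (n+1) = dcoef (2*α) (n+1) / 2 := by
    intro n
    induction n using Nat.strong_induction_on with
    | _ n ih =>
      match n, ih with
      | 0, _ =>
        rw [hu1, dcoef_one]
        ring
      | 1, ih =>
        have h := hrec 1 le_rfl
        rw [hu0, hu1] at h
        norm_num at h
        have h1 := dcoef_rec (2*α) 1
        rw [dcoef_one] at h1
        push_cast at h1
        rw [h]
        linear_combination (-1/24)*h1
      | (m+2), ih =>
        have h := hrec (m+2) (by omega)
        have e1 : m+2-1 = m+1 := by omega
        rw [e1] at h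
        rw [ih (m+1) (by omega), ih m (by omega)] at h
        have h1 := dcoef_rec (2*α) (m+2)
        have h2 := dcoef_rec (2*α) (m+1)
        push_cast at h1 h2 h
        have hN0 : ((m:ℝ)+2) ≠ 0 := by positivity
        have hN1 : ((m:ℝ)+3) ≠ 0 := by positivity
        have hN2 : (2*((m:ℝ)+2)+1) ≠ 0 := by positivity
        have hN3 : (2*((m:ℝ)+2)^2+3*((m:ℝ)+2)+1) ≠ 0 := by positivity
        rw [h]
        linear_combination (norm := (field_simp; ring))
          (-1/(4*((m:ℝ)+3)*(2*((m:ℝ)+2)+1)))*h1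
          + (((m:ℝ)+1)/(4*((m:ℝ)+2)*((m:ℝ)+3)*(2*((m:ℝ)+2)+1)))*h2
  -- summability
  have hSd := summable_dcoef_pow (2*α) x hx
  have hSshift : Summable (fun n => dcoef (2*α) (n+1) * x^(2*(n+1))) :=
    (summable_nat_add_iff (f := fun k => dcoef (2*α) k * x^(2*k)) 1).mpr hSd
  have hsum_u : Summable (fun n => u n * x^(2*n)) := by
    rw [← summable_nat_add_iff (f := fun n => u n * x^(2*n)) 1]
    exact (hSshift.div_const 2).congr fun n => by rw [hu' n]; ring
  -- the tsum identity
  have hT : (∑' n, u n * x^(2*n)) = 1/2 + (∑' k, dcoef (2*α) k * x^(2*k))/2 := by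
    rw [Summable.tsum_eq_zero_add hsum_u, Summable.tsum_eq_zero_add hSd, hu0, dcoef_zero]
    have e : ∑' n, u (n+1) * x^(2*(n+1))
        = ∑' n, (dcoef (2*α) (n+1) * x^(2*(n+1)))/2 :=
      tsum_congr fun n => by rw [hu' n]; ring
    rw [e, tsum_div_const]
    ring
  have hkey2 := key (2*α) x hx
  have hkey1 := key α x hx
  have hc1 : Real.cos (α * Real.arcsin x) ^ 2 = ∑' n : ℕ, u n * x ^ (2 * n) := by
    rw [Real.cos_sq, hT]
    rw [show 2*(α * Real.arcsin x) = (2*α) * Real.arcsin x from by ring, hkey2]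
  refine ⟨hc1, ?_⟩
  have hhF : hyperF (α / 2) (-α / 2) (1 / 2) (x ^ 2) = ∑' k, dcoef α k * x^(2*k) := by
    unfold hyperF dcoef
    refine tsum_congr fun k => ?_
    rw [← pow_mul]
  rw [← hc1, hhF, ← hkey1]
end

section
/- Let α be a real number and x a real number with |x| < 1. Define a sequence (v_n) by v_0 = 1, v_1 = (1−α²)/2, v_2 = (13α⁴ − 50α² + 37)/120, and for n ≥ 2, v_{n+1} = ((−5α² + 6n² + 9n + 5)/(2n² + 9n + 10)) v_n + ((−9α⁴ + 10α² + 20α²n(4n+3) − 4n(4n(3n(n+1)+2)+3) − 1)/(4(n+1)(n+2)(2n+3)(2n+5))) v_{n-1} + ((9α⁴ − 10α²(1−2n)² + (1−2n)⁴)/(4(n+1)(n+2)(2n+3)(2n+5))) v_{n-2}. Then sin³(α · arcsin x) = α³ ∑_{n=0}^∞ v_n x^{2n+3}, where the series equals α³ x³ F((1+α)/2, (1−α)/2; 3/2; x²)³. -/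
open scoped Nat


noncomputable def cc (β : ℝ) : ℕ → ℝ
  | 0 => β
  | (k+1) => cc β k * (((2*(k:ℝ)+1)^2 - β^2) / ((2*(k:ℝ)+2)*(2*(k:ℝ)+3)))

lemma cc_succ (β : ℝ) (k : ℕ) :
    cc β (k+1) = cc β k * (((2*(k:ℝ)+1)^2 - β^2) / ((2*(k:ℝ)+2)*(2*(k:ℝ)+3))) := rfl

lemma cc_zero (β : ℝ) : cc β 0 = β := rfl

lemma ccmul (β : ℝ) (k : ℕ) :
    cc β (k+1) * ((2*(k:ℝ)+2)*(2*(k:ℝ)+3)) = cc β k * ((2*(k:ℝ)+1)^2 - β^2) := by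
  have h : ((2*(k:ℝ)+2)*(2*(k:ℝ)+3)) ≠ 0 := by positivity
  rw [cc_succ]; field_simp

/-- The coefficient sequences for `β = α` and `β = 3α` satisfy the three-term recurrence. -/
lemma cc_rec (α β : ℝ) (hβ : β^2 = α^2 ∨ β^2 = 9*α^2) (m : ℕ) :
    cc β (m+4) =
      ((-(5 * α ^ 2) + 6 * ((m:ℝ)+2) ^ 2 + 9 * ((m:ℝ)+2) + 5) /
          (2 * ((m:ℝ)+2) ^ 2 + 9 * ((m:ℝ)+2) + 10)) * cc β (m+3)
      + ((-(9 * α ^ 4) + 10 * α ^ 2 + 20 * α ^ 2 * ((m:ℝ)+2) * (4 * ((m:ℝ)+2) + 3)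
            - 4 * ((m:ℝ)+2) * (4 * ((m:ℝ)+2) * (3 * ((m:ℝ)+2) * (((m:ℝ)+2) + 1) + 2) + 3) - 1) /
          (4 * (((m:ℝ)+2) + 1) * (((m:ℝ)+2) + 2) * (2 * ((m:ℝ)+2) + 3) * (2 * ((m:ℝ)+2) + 5)))
            * cc β (m+2)
      + ((9 * α ^ 4 - 10 * α ^ 2 * (1 - 2 * ((m:ℝ)+2)) ^ 2 + (1 - 2 * ((m:ℝ)+2)) ^ 4) /
          (4 * (((m:ℝ)+2) + 1) * (((m:ℝ)+2) + 2) * (2 * ((m:ℝ)+2) + 3) * (2 * ((m:ℝ)+2) + 5)))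
            * cc β (m+1) := by
  have e3 : cc β (m+4) = cc β (m+3) * (((2*((m:ℝ)+3)+1)^2 - β^2) / ((2*((m:ℝ)+3)+2)*(2*((m:ℝ)+3)+3))) := by
    rw [show m+4 = (m+3)+1 by ring, cc_succ]; push_cast; ring_nf
  have e2 : cc β (m+3) = cc β (m+2) * (((2*((m:ℝ)+2)+1)^2 - β^2) / ((2*((m:ℝ)+2)+2)*(2*((m:ℝ)+2)+3))) := by
    rw [show m+3 = (m+2)+1 by ring, cc_succ]; push_cast; ring_nf
  have e1 : cc β (m+2) = cc β (m+1) * (((2*((m:ℝ)+1)+1)^2 - β^2) / ((2*((m:ℝ)+1)+2)*(2*((m:ℝ)+1)+3))) := by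
    rw [show m+2 = (m+1)+1 by ring, cc_succ]; push_cast; ring_nf
  set n : ℝ := (m:ℝ) with hn
  have h1 : (2*(n+3)+2)*(2*(n+3)+3) ≠ 0 := by positivity
  have h2 : (2*(n+2)+2)*(2*(n+2)+3) ≠ 0 := by positivity
  have h3 : (2*(n+1)+2)*(2*(n+1)+3) ≠ 0 := by positivity
  have h4 : (2 * (n+2) ^ 2 + 9 * (n+2) + 10) ≠ 0 := by positivity
  have h5 : (4 * ((n+2) + 1) * ((n+2) + 2) * (2 * (n+2) + 3) * (2 * (n+2) + 5)) ≠ 0 := by positivity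
  rcases hβ with h | h <;>
  · rw [e3, e2, e1, h, hn]
    field_simp
    ring

lemma w_eq_v (α : ℝ) (v : ℕ → ℝ)
    (hv0 : v 0 = 1)
    (hv1 : v 1 = (1 - α ^ 2) / 2)
    (hv2 : v 2 = (13 * α ^ 4 - 50 * α ^ 2 + 37) / 120)
    (hrec : ∀ n : ℕ, 2 ≤ n →
      v (n + 1) =
        ((-(5 * α ^ 2) + 6 * (n : ℝ) ^ 2 + 9 * (n : ℝ) + 5) /
          (2 * (n : ℝ) ^ 2 + 9 * (n : ℝ) + 10)) * v n
        + ((-(9 * α ^ 4) + 10 * α ^ 2 + 20 * α ^ 2 * (n : ℝ) * (4 * (n : ℝ) + 3)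
            - 4 * (n : ℝ) * (4 * (n : ℝ) * (3 * (n : ℝ) * ((n : ℝ) + 1) + 2) + 3) - 1) /
          (4 * ((n : ℝ) + 1) * ((n : ℝ) + 2) * (2 * (n : ℝ) + 3) * (2 * (n : ℝ) + 5)))
            * v (n - 1)
        + ((9 * α ^ 4 - 10 * α ^ 2 * (1 - 2 * (n : ℝ)) ^ 2 + (1 - 2 * (n : ℝ)) ^ 4) /
          (4 * ((n : ℝ) + 1) * ((n : ℝ) + 2) * (2 * (n : ℝ) + 3) * (2 * (n : ℝ) + 5)))
            * v (n - 2)) :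
    ∀ n : ℕ, 3 * cc α (n+1) - cc (3*α) (n+1) = 4 * α^3 * v n := by
  intro n
  induction n using Nat.strong_induction_on with
  | _ n ih =>
    match n with
    | 0 =>
      rw [hv0, cc_succ, cc_succ]
      simp only [cc]
      push_cast
      ring
    | 1 =>
      rw [hv1]
      simp only [cc_succ, cc]
      push_cast
      field_simp
      ring
    | 2 =>
      rw [hv2]
      simp only [cc_succ, cc]
      push_cast
      field_simp
      ring
    | (m+3) =>
      have hrec' := hrec (m+2) (by omega)
      have hm2 : ((m+2 : ℕ) : ℝ) = (m:ℝ)+2 := by push_cast; ring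
      rw [show m+2+1 = m+3 by ring, show m+2-1 = m+1 by omega, show m+2-2 = m by omega, hm2] at hrec'
      rw [hrec']
      have i2 := ih (m+2) (by omega)
      have i1 := ih (m+1) (by omega)
      have i0 := ih m (by omega)
      have r1 := cc_rec α α (Or.inl rfl) m
      have r3 := cc_rec α (3*α) (Or.inr (by ring)) m
      rw [show m+3+1 = m+4 by ring] -- goal indices
      linear_combination 3 * r1 - r3 +
        ((-(5 * α ^ 2) + 6 * ((m:ℝ)+2) ^ 2 + 9 * ((m:ℝ)+2) + 5) /
          (2 * ((m:ℝ)+2) ^ 2 + 9 * ((m:ℝ)+2) + 10)) * i2 +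
        ((-(9 * α ^ 4) + 10 * α ^ 2 + 20 * α ^ 2 * ((m:ℝ)+2) * (4 * ((m:ℝ)+2) + 3)
            - 4 * ((m:ℝ)+2) * (4 * ((m:ℝ)+2) * (3 * ((m:ℝ)+2) * (((m:ℝ)+2) + 1) + 2) + 3) - 1) /
          (4 * (((m:ℝ)+2) + 1) * (((m:ℝ)+2) + 2) * (2 * ((m:ℝ)+2) + 3) * (2 * ((m:ℝ)+2) + 5))) * i1 +
        ((9 * α ^ 4 - 10 * α ^ 2 * (1 - 2 * ((m:ℝ)+2)) ^ 2 + (1 - 2 * ((m:ℝ)+2)) ^ 4) /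
          (4 * (((m:ℝ)+2) + 1) * (((m:ℝ)+2) + 2) * (2 * ((m:ℝ)+2) + 3) * (2 * ((m:ℝ)+2) + 5))) * i0

lemma cc_abs_le_of (β : ℝ) (k : ℕ) (h : |β| ≤ 2*(k:ℝ)+1) : |cc β (k+1)| ≤ |cc β k| := by
  rw [cc_succ, abs_mul]
  have h1 : |(((2*(k:ℝ)+1)^2 - β^2) / ((2*(k:ℝ)+2)*(2*(k:ℝ)+3)))| ≤ 1 := by
    rw [abs_div, div_le_one (by positivity)]
    have hb : β^2 ≤ (2*(k:ℝ)+1)^2 := by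
      have := abs_nonneg β
      nlinarith [sq_abs β]
    rw [abs_of_nonneg (by linarith), abs_of_nonneg (by positivity)]
    nlinarith
  calc |cc β k| * |(((2*(k:ℝ)+1)^2 - β^2) / ((2*(k:ℝ)+2)*(2*(k:ℝ)+3)))|
      ≤ |cc β k| * 1 := by gcongr
    _ = |cc β k| := mul_one _

lemma cc_bounded (β : ℝ) : ∃ C : ℝ, 0 ≤ C ∧ ∀ k, |cc β k| ≤ C := by
  set k₀ := ⌈|β|⌉₊ with hk₀
  set C := ∑ j ∈ Finset.range (k₀+1), |cc β j| with hC
  have hCnn : 0 ≤ C := Finset.sum_nonneg fun j _ => abs_nonneg _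
  refine ⟨C, hCnn, fun k => ?_⟩
  rcases le_or_gt k k₀ with h | h
  · exact Finset.single_le_sum (f := fun j => |cc β j|) (fun j _ => abs_nonneg _)
      (Finset.mem_range.2 (by omega))
  · have key : ∀ m : ℕ, |cc β (k₀ + m)| ≤ |cc β k₀| := by
      intro m
      induction m with
      | zero => simp
      | succ m ih =>
        have : |β| ≤ 2*((k₀+m : ℕ):ℝ)+1 := by
          have := Nat.le_ceil |β|
          push_cast at this ⊢
          linarith
        calc |cc β (k₀ + (m+1))| = |cc β ((k₀+m)+1)| := by ring_nf
          _ ≤ |cc β (k₀+m)| := cc_abs_le_of β _ this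
          _ ≤ |cc β k₀| := ih
    obtain ⟨m, rfl⟩ := Nat.exists_eq_add_of_le h.le
    calc |cc β (k₀ + m)| ≤ |cc β k₀| := key m
      _ ≤ C := Finset.single_le_sum (f := fun j => |cc β j|) (fun j _ => abs_nonneg _)
          (Finset.mem_range.2 (by omega))

lemma summable_cc (β : ℝ) {q : ℝ} (h0 : 0 ≤ q) (h1 : q < 1) :
    Summable (fun k : ℕ => |cc β k| * ((k:ℝ)+1)^2 * q ^ k) := by
  obtain ⟨C, hC0, hC⟩ := cc_bounded β
  have hs : Summable (fun k : ℕ => C * (((k:ℝ)^2 + 2*(k:ℝ) + 1) * q ^ k)) := by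
    apply Summable.mul_left
    have s2 := summable_pow_mul_geometric_of_norm_lt_one (R := ℝ) 2 (by rwa [Real.norm_eq_abs, abs_of_nonneg h0])
    have s1 := summable_pow_mul_geometric_of_norm_lt_one (R := ℝ) 1 (by rwa [Real.norm_eq_abs, abs_of_nonneg h0])
    have s0 := summable_pow_mul_geometric_of_norm_lt_one (R := ℝ) 0 (by rwa [Real.norm_eq_abs, abs_of_nonneg h0])
    have := (s2.add ((s1.mul_left 2).add s0))
    refine this.congr (fun k => ?_)
    push_cast
    ring
  apply Summable.of_nonneg_of_le (fun k => by positivity) (fun k => ?_) hs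
  calc |cc β k| * ((k:ℝ)+1)^2 * q ^ k ≤ C * ((k:ℝ)+1)^2 * q ^ k := by gcongr; exact hC k
    _ = C * (((k:ℝ)^2 + 2*(k:ℝ) + 1) * q ^ k) := by ring

noncomputable def gfun (β : ℝ) (k : ℕ) (θ : ℝ) : ℝ := cc β k * Real.sin θ ^ (2*k+1)
noncomputable def gfun' (β : ℝ) (k : ℕ) (θ : ℝ) : ℝ :=
  cc β k * (2*(k:ℝ)+1) * (Real.sin θ ^ (2*k) * Real.cos θ)
noncomputable def gfun'' (β : ℝ) (k : ℕ) (θ : ℝ) : ℝ :=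
  cc β k * (2*(k:ℝ)+1) *
    ((2*(k:ℝ) * Real.sin θ ^ (2*k-1) * Real.cos θ) * Real.cos θ + Real.sin θ ^ (2*k) * (-Real.sin θ))

lemma hasDerivAt_gfun (β : ℝ) (k : ℕ) (θ : ℝ) : HasDerivAt (gfun β k) (gfun' β k θ) θ := by
  have h := ((Real.hasDerivAt_sin θ).pow (2*k+1)).const_mul (cc β k)
  unfold gfun gfun'
  refine h.congr_deriv ?_
  push_cast [Nat.add_sub_cancel]
  ring

lemma hasDerivAt_gfun' (β : ℝ) (k : ℕ) (θ : ℝ) : HasDerivAt (gfun' β k) (gfun'' β k θ) θ := by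
  have h := (((Real.hasDerivAt_sin θ).pow (2*k)).mul (Real.hasDerivAt_cos θ)).const_mul
    (cc β k * (2*(k:ℝ)+1))
  unfold gfun' gfun''
  refine h.congr_deriv ?_
  push_cast [Pi.pow_apply]
  ring

section bounds

variable {r s co : ℝ} (hr0 : 0 < r) (hr1 : r ≤ 1) (hs : |s| ≤ r) (hco : |co| ≤ 1)

lemma inv_one_le (hr0 : 0 < r) (hr1 : r ≤ 1) : (1:ℝ) ≤ r⁻¹ := by
  rw [← one_div, le_div_iff₀ hr0]; simpa using hr1

lemma pow_sub_le (hr0 : 0 < r) (hr1 : r ≤ 1) (k : ℕ) : r ^ (2*k-1) ≤ (r^2)^k / r := by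
  cases k with
  | zero =>
    simp only [Nat.mul_zero, Nat.zero_sub, pow_zero, one_div]
    exact inv_one_le hr0 hr1
  | succ k =>
    apply le_of_eq
    rw [show 2*(k+1)-1 = 2*k+1 by omega, ← pow_mul, eq_div_iff (ne_of_gt hr0), ← pow_succ]
    congr 1

lemma pow_mul_le (hr0 : 0 < r) (hr1 : r ≤ 1) (k : ℕ) : r ^ (2*k) * r ≤ (r^2)^k / r := by
  rw [← pow_mul, div_eq_mul_inv]
  have hinv : r ≤ r⁻¹ := le_trans hr1 (inv_one_le hr0 hr1)
  gcongr

include hr0 hr1 hs hco in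
lemma bound1 (c : ℝ) (k : ℕ) :
    |c * (2*(k:ℝ)+1) * (s ^ (2*k) * co)| ≤ |c| * ((k:ℝ)+1)^2 * (r^2)^k * (8/r) := by
  have hk : (0:ℝ) ≤ 2*(k:ℝ)+1 := by positivity
  have h1 : |c * (2*(k:ℝ)+1) * (s ^ (2*k) * co)| = |c| * (2*(k:ℝ)+1) * (|s| ^ (2*k) * |co|) := by
    rw [abs_mul, abs_mul, abs_mul, abs_pow, abs_of_nonneg hk]
  rw [h1]
  have hsn : (0:ℝ) ≤ |s| := abs_nonneg s
  calc |c| * (2*(k:ℝ)+1) * (|s| ^ (2*k) * |co|)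
      ≤ |c| * (2*(k:ℝ)+1) * (r ^ (2*k) * 1) := by gcongr
    _ = |c| * (2*(k:ℝ)+1) * (r^2)^k := by rw [pow_mul]; ring
    _ ≤ |c| * (((k:ℝ)+1)^2 * 8) * (r^2)^k := by
        gcongr
        nlinarith [sq_nonneg ((k:ℝ))]
    _ = |c| * ((k:ℝ)+1)^2 * (r^2)^k * 8 := by ring
    _ ≤ |c| * ((k:ℝ)+1)^2 * (r^2)^k * (8/r) := by
        gcongr
        rw [le_div_iff₀ hr0]; nlinarith

include hr0 hr1 hs hco in
lemma bound2 (c : ℝ) (k : ℕ) :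
    |c * (2*(k:ℝ)+1) * ((2*(k:ℝ) * s ^ (2*k-1) * co) * co + s ^ (2*k) * (-s))|
      ≤ |c| * ((k:ℝ)+1)^2 * (r^2)^k * (8/r) := by
  have hk : (0:ℝ) ≤ 2*(k:ℝ)+1 := by positivity
  have hsn : (0:ℝ) ≤ |s| := abs_nonneg s
  have hps : (0:ℝ) < (r^2)^k / r := by positivity
  have hinner : |(2*(k:ℝ) * s ^ (2*k-1) * co) * co + s ^ (2*k) * (-s)|
      ≤ (2*(k:ℝ)+1) * ((r^2)^k / r) := by
    calc |(2*(k:ℝ) * s ^ (2*k-1) * co) * co + s ^ (2*k) * (-s)|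
        ≤ |(2*(k:ℝ) * s ^ (2*k-1) * co) * co| + |s ^ (2*k) * (-s)| := abs_add_le _ _
      _ = 2*(k:ℝ) * (|s| ^ (2*k-1) * (|co| * |co|)) + |s| ^ (2*k) * |s| := by
          simp only [abs_mul, abs_pow, abs_neg, Nat.abs_cast, abs_two]
          ring
      _ ≤ 2*(k:ℝ) * (r ^ (2*k-1) * (1 * 1)) + r ^ (2*k) * r := by gcongr
      _ = 2*(k:ℝ) * r ^ (2*k-1) + r ^ (2*k) * r := by ring
      _ ≤ 2*(k:ℝ) * ((r^2)^k / r) + (r^2)^k / r := by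
          gcongr
          · exact pow_sub_le hr0 hr1 k
          · exact pow_mul_le hr0 hr1 k
      _ = (2*(k:ℝ)+1) * ((r^2)^k / r) := by ring
  calc |c * (2*(k:ℝ)+1) * ((2*(k:ℝ) * s ^ (2*k-1) * co) * co + s ^ (2*k) * (-s))|
      = |c| * (2*(k:ℝ)+1) * |(2*(k:ℝ) * s ^ (2*k-1) * co) * co + s ^ (2*k) * (-s)| := by
        rw [abs_mul, abs_mul, abs_of_nonneg hk]
      _ ≤ |c| * (2*(k:ℝ)+1) * ((2*(k:ℝ)+1) * ((r^2)^k / r)) := by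
          gcongr
      _ ≤ |c| * ((k:ℝ)+1)^2 * (r^2)^k * (8/r) := by
          rw [div_eq_mul_inv, div_eq_mul_inv]
          have h88 : (2*(k:ℝ)+1) * (2*(k:ℝ)+1) ≤ 8 * ((k:ℝ)+1)^2 := by nlinarith [sq_nonneg (k:ℝ)]
          calc |c| * (2*(k:ℝ)+1) * ((2*(k:ℝ)+1) * ((r^2)^k * r⁻¹))
              = ((2*(k:ℝ)+1) * (2*(k:ℝ)+1)) * (|c| * ((r^2)^k * r⁻¹)) := by ring
            _ ≤ (8 * ((k:ℝ)+1)^2) * (|c| * ((r^2)^k * r⁻¹)) := by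
                gcongr
            _ = |c| * ((k:ℝ)+1)^2 * (r^2)^k * (8 * r⁻¹) := by ring

include hr0 hr1 hs in
lemma bound0 (c : ℝ) (k : ℕ) :
    |c * s ^ (2*k+1)| ≤ |c| * ((k:ℝ)+1)^2 * (r^2)^k * (8/r) := by
  have hsn : (0:ℝ) ≤ |s| := abs_nonneg s
  have h8 : (1:ℝ) ≤ ((k:ℝ)+1)^2 * (8/r) := by
    have h1 : (1:ℝ) ≤ ((k:ℝ)+1)^2 := by nlinarith [Nat.cast_nonneg (α := ℝ) k]
    have h2 : (1:ℝ) ≤ 8/r := by rw [le_div_iff₀ hr0]; linarith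
    nlinarith
  calc |c * s ^ (2*k+1)| = |c| * |s| ^ (2*k+1) := by rw [abs_mul, abs_pow]
    _ ≤ |c| * r ^ (2*k+1) := by gcongr
    _ = |c| * ((r^2)^k * r) := by rw [pow_succ, pow_mul]
    _ ≤ |c| * ((r^2)^k * 1) := by gcongr
    _ = |c| * (r^2)^k * 1 := by ring
    _ ≤ |c| * (r^2)^k * (((k:ℝ)+1)^2 * (8/r)) := by gcongr
    _ = |c| * ((k:ℝ)+1)^2 * (r^2)^k * (8/r) := by ring

include hr0 hr1 hs in
lemma boundP (c : ℝ) (k : ℕ) :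
    |c * ((2*(k:ℝ)+1) * (2*(k:ℝ)) * s ^ (2*k-1))| ≤ |c| * ((k:ℝ)+1)^2 * (r^2)^k * (8/r) := by
  have hsn : (0:ℝ) ≤ |s| := abs_nonneg s
  have hk : (0:ℝ) ≤ (2*(k:ℝ)+1) * (2*(k:ℝ)) := by positivity
  calc |c * ((2*(k:ℝ)+1) * (2*(k:ℝ)) * s ^ (2*k-1))|
      = |c| * ((2*(k:ℝ)+1) * (2*(k:ℝ)) * |s| ^ (2*k-1)) := by
        rw [abs_mul, abs_mul, abs_pow, abs_of_nonneg (by positivity : (0:ℝ) ≤ (2*(k:ℝ)+1) * (2*(k:ℝ)))]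
    _ ≤ |c| * ((2*(k:ℝ)+1) * (2*(k:ℝ)) * (r ^ (2*k-1))) := by gcongr
    _ ≤ |c| * ((2*(k:ℝ)+1) * (2*(k:ℝ)) * ((r^2)^k / r)) := by
        gcongr
        exact pow_sub_le hr0 hr1 k
    _ ≤ |c| * ((8 * ((k:ℝ)+1)^2) * ((r^2)^k / r)) := by
        gcongr |c| * (?_ * ((r^2)^k / r))
        nlinarith [sq_nonneg (k:ℝ)]
    _ = |c| * ((k:ℝ)+1)^2 * (r^2)^k * (8/r) := by
        rw [div_eq_mul_inv, div_eq_mul_inv]; ring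

include hr0 hr1 hs in
lemma boundQ (c : ℝ) (k : ℕ) :
    |c * ((2*(k:ℝ)+1)^2 * s ^ (2*k+1))| ≤ |c| * ((k:ℝ)+1)^2 * (r^2)^k * (8/r) := by
  have hsn : (0:ℝ) ≤ |s| := abs_nonneg s
  calc |c * ((2*(k:ℝ)+1)^2 * s ^ (2*k+1))|
      = |c| * ((2*(k:ℝ)+1)^2 * |s| ^ (2*k+1)) := by
        rw [abs_mul, abs_mul, abs_pow, abs_pow,
          abs_of_nonneg (by positivity : (0:ℝ) ≤ 2*(k:ℝ)+1)]
    _ ≤ |c| * ((2*(k:ℝ)+1)^2 * (r ^ (2*k) * r)) := by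
        rw [← pow_succ]
        gcongr
    _ ≤ |c| * ((2*(k:ℝ)+1)^2 * ((r^2)^k / r)) := by
        gcongr
        exact pow_mul_le hr0 hr1 k
    _ ≤ |c| * ((8 * ((k:ℝ)+1)^2) * ((r^2)^k / r)) := by
        gcongr |c| * (?_ * ((r^2)^k / r))
        nlinarith [sq_nonneg (k:ℝ), Nat.cast_nonneg (α := ℝ) k]
    _ = |c| * ((k:ℝ)+1)^2 * (r^2)^k * (8/r) := by
        rw [div_eq_mul_inv, div_eq_mul_inv]; ring

end bounds

lemma sin_series (β x : ℝ) (hx : |x| < 1) :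
    Real.sin (β * Real.arcsin x) = ∑' k : ℕ, cc β k * x ^ (2*k+1) := by
  rcases eq_or_ne β 0 with rfl | hβ0
  · have hz : ∀ k, cc (0:ℝ) k = 0 := by
      intro k; induction k with
      | zero => rfl
      | succ k ih => rw [cc_succ, ih, zero_mul]
    simp [hz]
  · set r : ℝ := (1 + |x|)/2 with hrdef
    have hxabs : 0 ≤ |x| := abs_nonneg x
    have hr0 : 0 < r := by rw [hrdef]; linarith
    have hr1 : r < 1 := by rw [hrdef]; linarith
    have hxr : |x| < r := by rw [hrdef]; linarith
    set b := Real.arcsin r with hbdef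
    have hb0 : 0 < b := Real.arcsin_pos.2 hr0
    have hbpi : b ≤ Real.pi/2 := Real.arcsin_le_pi_div_two r
    have hsinb : Real.sin b = r := Real.sin_arcsin (by linarith) (le_of_lt hr1)
    have ht : IsOpen (Set.Ioo (-b) b) := isOpen_Ioo
    have htp : IsPreconnected (Set.Ioo (-b) b) := isPreconnected_Ioo
    have htc : Convex ℝ (Set.Ioo (-b) b) := convex_Ioo _ _
    have h0t : (0:ℝ) ∈ Set.Ioo (-b) b := ⟨by linarith, hb0⟩
    have hsint : ∀ θ ∈ Set.Ioo (-b) b, |Real.sin θ| ≤ r := by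
      intro θ hθ
      obtain ⟨h1, h2⟩ := hθ
      have hpi : 0 < Real.pi/2 := by positivity
      have hmem1 : θ ∈ Set.Icc (-(Real.pi/2)) (Real.pi/2) := ⟨by linarith, by linarith⟩
      have hmemb : b ∈ Set.Icc (-(Real.pi/2)) (Real.pi/2) := ⟨by linarith, hbpi⟩
      have hmemnb : -b ∈ Set.Icc (-(Real.pi/2)) (Real.pi/2) := ⟨by linarith, by linarith⟩
      have hu := Real.strictMonoOn_sin hmem1 hmemb h2
      have hl := Real.strictMonoOn_sin hmemnb hmem1 h1
      rw [Real.sin_neg, hsinb] at hl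
      rw [hsinb] at hu
      rw [abs_le]; constructor <;> linarith
    have hq0 : (0:ℝ) ≤ r^2 := sq_nonneg r
    have hq1 : r^2 < 1 := by nlinarith
    have hu : Summable (fun k : ℕ => |cc β k| * ((k:ℝ)+1)^2 * (r^2)^k * (8/r)) :=
      (summable_cc β hq0 hq1).mul_right _
    -- the two differentiation steps
    have hg0 : Summable (fun k => gfun β k 0) := by
      have he : (fun k => gfun β k 0) = fun _ => (0:ℝ) := by
        funext k
        simp [gfun, Real.sin_zero, zero_pow (show 2*k+1 ≠ 0 by omega)]
      rw [he]; exact summable_zero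
    have hg'0 : Summable (fun k => gfun' β k 0) := by
      apply summable_of_ne_finset_zero (s := {0})
      intro k hk
      simp only [Finset.mem_singleton] at hk
      simp [gfun', Real.sin_zero, zero_pow (show 2*k ≠ 0 by omega)]
    have key1 : ∀ θ ∈ Set.Ioo (-b) b,
        HasDerivAt (fun z => ∑' k, gfun β k z) (∑' k, gfun' β k θ) θ := by
      intro θ hθ
      refine hasDerivAt_tsum_of_isPreconnected hu ht htp
        (fun k y _ => hasDerivAt_gfun β k y) (fun k y hy => ?_) h0t hg0 hθ
      rw [Real.norm_eq_abs]
      exact bound1 hr0 (le_of_lt hr1) (hsint y hy) (Real.abs_cos_le_one y) (cc β k) k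
    have key2 : ∀ θ ∈ Set.Ioo (-b) b,
        HasDerivAt (fun z => ∑' k, gfun' β k z) (∑' k, gfun'' β k θ) θ := by
      intro θ hθ
      refine hasDerivAt_tsum_of_isPreconnected hu ht htp
        (fun k y _ => hasDerivAt_gfun' β k y) (fun k y hy => ?_) h0t hg'0 hθ
      rw [Real.norm_eq_abs]
      exact bound2 hr0 (le_of_lt hr1) (hsint y hy) (Real.abs_cos_le_one y) (cc β k) k
    -- summability of the various series at points of the interval
    have hSg : ∀ θ ∈ Set.Ioo (-b) b, Summable (fun k => gfun β k θ) := by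
      intro θ hθ
      refine Summable.of_norm_bounded hu (fun k => ?_)
      rw [Real.norm_eq_abs]
      exact bound0 hr0 (le_of_lt hr1) (hsint θ hθ) (cc β k) k
    -- the ODE satisfied by the series
    have hODE : ∀ θ ∈ Set.Ioo (-b) b,
        (∑' k, gfun'' β k θ) = -β^2 * ∑' k, gfun β k θ := by
      intro θ hθ
      have hsθ := hsint θ hθ
      set P : ℕ → ℝ := fun k => cc β k * ((2*(k:ℝ)+1) * (2*(k:ℝ)) * Real.sin θ ^ (2*k-1))
        with hPdef
      set Q : ℕ → ℝ := fun k => cc β k * ((2*(k:ℝ)+1)^2 * Real.sin θ ^ (2*k+1)) with hQdef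
      have hSP : Summable P := by
        refine Summable.of_norm_bounded hu (fun k => ?_)
        rw [Real.norm_eq_abs]
        exact boundP hr0 (le_of_lt hr1) hsθ (cc β k) k
      have hSQ : Summable Q := by
        refine Summable.of_norm_bounded hu (fun k => ?_)
        rw [Real.norm_eq_abs]
        exact boundQ hr0 (le_of_lt hr1) hsθ (cc β k) k
      have hco : Real.cos θ * Real.cos θ = 1 - Real.sin θ^2 := by
        have := Real.sin_sq_add_cos_sq θ; nlinarith
      have hterm : ∀ k, gfun'' β k θ = P k - Q k := by
        intro k
        cases k with
        | zero =>
          simp only [gfun'', hPdef, hQdef]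
          norm_num
        | succ k =>
          show cc β (k+1) * (2*((k+1:ℕ):ℝ)+1) *
            ((2*((k+1:ℕ):ℝ) * Real.sin θ ^ (2*(k+1)-1) * Real.cos θ) * Real.cos θ
              + Real.sin θ ^ (2*(k+1)) * (-Real.sin θ)) = P (k+1) - Q (k+1)
          rw [hPdef, hQdef]
          simp only [gfun'']
          rw [show 2*(k+1)-1 = 2*k+1 by omega]
          push_cast
          linear_combination (cc β (k+1) * (2*(k:ℝ)+3) * (2*(k:ℝ)+2) * Real.sin θ ^ (2*k+1)) * hco
      have hP0 : P 0 = 0 := by rw [hPdef]; norm_num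
      have hPshift : ∀ k : ℕ, P (k+1) = cc β k * (((2*(k:ℝ)+1)^2 - β^2) * Real.sin θ ^ (2*k+1)) := by
        intro k
        rw [hPdef]
        simp only
        rw [show 2*(k+1)-1 = 2*k+1 by omega, cc_succ]
        have hne : ((2*(k:ℝ)+2)*(2*(k:ℝ)+3)) ≠ 0 := by positivity
        push_cast
        field_simp
        ring
      calc (∑' k, gfun'' β k θ) = ∑' k, (P k - Q k) := tsum_congr hterm
        _ = (∑' k, P k) - ∑' k, Q k := hSP.tsum_sub hSQ
        _ = (P 0 + ∑' k, P (k+1)) - ∑' k, Q k := by rw [hSP.tsum_eq_zero_add]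
        _ = (∑' k, P (k+1)) - ∑' k, Q k := by rw [hP0, zero_add]
        _ = ∑' k, (P (k+1) - Q k) := (((summable_nat_add_iff 1).2 hSP).tsum_sub hSQ).symm
        _ = ∑' k, (-β^2) * gfun β k θ := by
            refine tsum_congr (fun k => ?_)
            rw [hPshift k, hQdef, gfun]
            simp only
            ring
        _ = -β^2 * ∑' k, gfun β k θ := tsum_mul_left
    -- derivative of the auxiliary "Wronskian" functions is zero
    have hcosd : ∀ θ : ℝ, HasDerivAt (fun z => Real.cos (β*z)) (-Real.sin (β*θ)*β) θ := by
      intro θ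
      have h := (Real.hasDerivAt_cos (β*θ)).comp θ ((hasDerivAt_id θ).const_mul β)
      exact h.congr_deriv (by ring)
    have hsind : ∀ θ : ℝ, HasDerivAt (fun z => Real.sin (β*z)) (Real.cos (β*θ)*β) θ := by
      intro θ
      have h := (Real.hasDerivAt_sin (β*θ)).comp θ ((hasDerivAt_id θ).const_mul β)
      exact h.congr_deriv (by ring)
    have hA : ∀ θ ∈ Set.Ioo (-b) b,
        HasDerivAt (fun z => β * (∑' k, gfun β k z) * Real.cos (β*z)
          - (∑' k, gfun' β k z) * Real.sin (β*z)) 0 θ := by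
      intro θ hθ
      have h := (((key1 θ hθ).const_mul β).mul (hcosd θ)).sub ((key2 θ hθ).mul (hsind θ))
      exact h.congr_deriv (by rw [hODE θ hθ]; ring)
    have hB : ∀ θ ∈ Set.Ioo (-b) b,
        HasDerivAt (fun z => β * (∑' k, gfun β k z) * Real.sin (β*z)
          + (∑' k, gfun' β k z) * Real.cos (β*z)) 0 θ := by
      intro θ hθ
      have h := (((key1 θ hθ).const_mul β).mul (hsind θ)).add ((key2 θ hθ).mul (hcosd θ))
      exact h.congr_deriv (by rw [hODE θ hθ]; ring)
    -- values at 0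
    have hG0 : (∑' k, gfun β k 0) = 0 := by
      have he : (fun k => gfun β k 0) = fun _ => (0:ℝ) := by
        funext k
        simp [gfun, Real.sin_zero, zero_pow (show 2*k+1 ≠ 0 by omega)]
      rw [he, tsum_zero]
    have hG10 : (∑' k, gfun' β k 0) = β := by
      rw [tsum_eq_single 0 (fun k hk => by
        simp [gfun', Real.sin_zero, zero_pow (show 2*k ≠ 0 by omega)])]
      show cc β 0 * (2*(0:ℕ)+1) * (Real.sin 0 ^ (2*0) * Real.cos 0) = β
      show β * (2*(0:ℕ)+1) * (Real.sin 0 ^ (2*0) * Real.cos 0) = β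
      norm_num
    -- location of arcsin x
    have hx1 : -1 ≤ x := by cases abs_le.1 (le_of_lt hx); linarith
    have hx2 : x ≤ 1 := le_of_lt (lt_of_le_of_lt (le_abs_self x) hx)
    have hxm : x ∈ Set.Icc (-1:ℝ) 1 := ⟨hx1, hx2⟩
    have hrm : r ∈ Set.Icc (-1:ℝ) 1 := ⟨by linarith, le_of_lt hr1⟩
    have hnrm : -r ∈ Set.Icc (-1:ℝ) 1 := ⟨by linarith, by linarith⟩
    have hθt : Real.arcsin x ∈ Set.Ioo (-b) b := by
      constructor
      · have := Real.strictMonoOn_arcsin hnrm hxm (by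
          have := neg_abs_le x; linarith)
        rwa [Real.arcsin_neg] at this
      · exact Real.strictMonoOn_arcsin hxm hrm (lt_of_le_of_lt (le_abs_self x) hxr)
    -- constancy
    have hconst : ∀ (f : ℝ → ℝ), (∀ θ ∈ Set.Ioo (-b) b, HasDerivAt f 0 θ) →
        f (Real.arcsin x) = f 0 := by
      intro f hf
      have := Convex.norm_image_sub_le_of_norm_hasDerivWithin_le (f := f)
        (f' := fun _ => (0:ℝ)) (C := 0)
        (fun y hy => (hf y hy).hasDerivWithinAt) (fun y _ => by simp) htc h0t hθt
      simp only [zero_mul, Real.norm_eq_abs] at this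
      have h0 : |f (Real.arcsin x) - f 0| ≤ 0 := this
      have := abs_nonneg (f (Real.arcsin x) - f 0)
      have : |f (Real.arcsin x) - f 0| = 0 := le_antisymm h0 this
      have := abs_eq_zero.1 this
      linarith [sub_eq_zero.1 this]
    have hAx := hconst _ hA
    have hBx := hconst _ hB
    rw [hG0, hG10] at hAx hBx
    simp only [Real.sin_zero, Real.cos_zero, mul_zero, zero_mul, mul_one, sub_zero,
      zero_add] at hAx hBx
    -- combine
    have pyth := Real.sin_sq_add_cos_sq (β * Real.arcsin x)
    have hkey : β * (∑' k, gfun β k (Real.arcsin x)) = β * Real.sin (β * Real.arcsin x) := by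
      linear_combination Real.cos (β * Real.arcsin x) * hAx
        + Real.sin (β * Real.arcsin x) * hBx
        - (β * (∑' k, gfun β k (Real.arcsin x))) * pyth
    have hG := mul_left_cancel₀ hβ0 hkey
    rw [← hG]
    refine tsum_congr (fun k => ?_)
    show cc β k * Real.sin (Real.arcsin x) ^ (2*k+1) = cc β k * x ^ (2*k+1)
    rw [Real.sin_arcsin hx1 hx2]



lemma hyperF_term (α : ℝ) : ∀ k : ℕ,
    α * ((ascPochhammer ℝ k).eval ((1+α)/2) * (ascPochhammer ℝ k).eval ((1-α)/2) /
      ((ascPochhammer ℝ k).eval ((3:ℝ)/2) * (k ! : ℝ))) = cc α k := by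
  intro k
  induction k with
  | zero => simp [ascPochhammer_zero, cc_zero]
  | succ k ih =>
    have hP : (0:ℝ) < (ascPochhammer ℝ k).eval ((3:ℝ)/2) :=
      ascPochhammer_pos k _ (by norm_num)
    have hk : ((k)! : ℝ) ≠ 0 := Nat.cast_ne_zero.2 (Nat.factorial_ne_zero k)
    have h32 : ((3:ℝ)/2 + (k:ℝ)) ≠ 0 := by positivity
    have hk1 : ((k:ℝ)+1) ≠ 0 := by positivity
    have h23 : ((2*(k:ℝ)+2)*(2*(k:ℝ)+3)) ≠ 0 := by positivity
    rw [ascPochhammer_succ_eval, ascPochhammer_succ_eval, ascPochhammer_succ_eval,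
      Nat.factorial_succ, cc_succ, ← ih]
    push_cast
    field_simp
    ring
  
lemma hyperF_eq (α x : ℝ) :
    α * x * hyperF ((1 + α) / 2) ((1 - α) / 2) (3 / 2) (x ^ 2)
      = ∑' k : ℕ, cc α k * x ^ (2*k+1) := by
  rw [hyperF, ← tsum_mul_left]
  refine tsum_congr fun k => ?_
  have hp : x^(2*k+1) = (x^2)^k * x := by rw [pow_succ, pow_mul]
  rw [← hyperF_term α k, hp]
  ring

lemma summable_cc_x (β x : ℝ) (hx : |x| < 1) :
    Summable (fun k : ℕ => cc β k * x ^ (2*k+1)) := by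
  set r : ℝ := (1 + |x|)/2 with hrdef
  have hxabs : 0 ≤ |x| := abs_nonneg x
  have hr0 : 0 < r := by rw [hrdef]; linarith
  have hr1 : r < 1 := by rw [hrdef]; linarith
  have hxr : |x| ≤ r := by rw [hrdef]; linarith
  refine Summable.of_norm_bounded
    ((summable_cc β (sq_nonneg r) (by nlinarith)).mul_right (8/r)) (fun k => ?_)
  rw [Real.norm_eq_abs]
  exact bound0 hr0 (le_of_lt hr1) hxr (cc β k) k

theorem cubed_sin_mul_arcsin_recurrence
    (α x : ℝ) (hx : |x| < 1)
    (v : ℕ → ℝ)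
    (hv0 : v 0 = 1)
    (hv1 : v 1 = (1 - α ^ 2) / 2)
    (hv2 : v 2 = (13 * α ^ 4 - 50 * α ^ 2 + 37) / 120)
    (hrec : ∀ n : ℕ, 2 ≤ n →
      v (n + 1) =
        ((-(5 * α ^ 2) + 6 * (n : ℝ) ^ 2 + 9 * (n : ℝ) + 5) /
          (2 * (n : ℝ) ^ 2 + 9 * (n : ℝ) + 10)) * v n
        + ((-(9 * α ^ 4) + 10 * α ^ 2 + 20 * α ^ 2 * (n : ℝ) * (4 * (n : ℝ) + 3)
            - 4 * (n : ℝ) * (4 * (n : ℝ) * (3 * (n : ℝ) * ((n : ℝ) + 1) + 2) + 3) - 1) /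
          (4 * ((n : ℝ) + 1) * ((n : ℝ) + 2) * (2 * (n : ℝ) + 3) * (2 * (n : ℝ) + 5)))
            * v (n - 1)
        + ((9 * α ^ 4 - 10 * α ^ 2 * (1 - 2 * (n : ℝ)) ^ 2 + (1 - 2 * (n : ℝ)) ^ 4) /
          (4 * ((n : ℝ) + 1) * ((n : ℝ) + 2) * (2 * (n : ℝ) + 3) * (2 * (n : ℝ) + 5)))
            * v (n - 2)) :
    Real.sin (α * Real.arcsin x) ^ 3 = α ^ 3 * ∑' n : ℕ, v n * x ^ (2 * n + 3) ∧
    α ^ 3 * ∑' n : ℕ, v n * x ^ (2 * n + 3)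
      = α ^ 3 * x ^ 3 * (hyperF ((1 + α) / 2) ((1 - α) / 2) (3 / 2) (x ^ 2)) ^ 3 := by
  have hx1 : -1 ≤ x := by cases abs_le.1 (le_of_lt hx); linarith
  have hx2 : x ≤ 1 := le_of_lt (lt_of_le_of_lt (le_abs_self x) hx)
  have S1 := sin_series α x hx
  have S3 := sin_series (3*α) x hx
  have Sa := summable_cc_x α x hx
  have Sb := summable_cc_x (3*α) x hx
  have hfs : Summable (fun k : ℕ => (3 * cc α k - cc (3*α) k)/4 * x^(2*k+1)) := by
    have he : (fun k : ℕ => (3 * cc α k - cc (3*α) k)/4 * x^(2*k+1))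
        = fun k => (3*(cc α k * x^(2*k+1)) - cc (3*α) k * x^(2*k+1))/4 := by
      funext k; ring
    rw [he]; exact ((Sa.mul_left 3).sub Sb).div_const 4
  have hsin3 : Real.sin (α * Real.arcsin x)^3
      = ∑' k : ℕ, (3 * cc α k - cc (3*α) k)/4 * x^(2*k+1) := by
    have h3 := Real.sin_three_mul (α * Real.arcsin x)
    have e : (3:ℝ) * (α * Real.arcsin x) = (3*α) * Real.arcsin x := by ring
    rw [e, S3] at h3
    have hstep : Real.sin (α * Real.arcsin x)^3
        = (3 * ∑' k : ℕ, cc α k * x^(2*k+1) - ∑' k : ℕ, cc (3*α) k * x^(2*k+1))/4 := by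
      rw [← S1]; linarith
    rw [hstep, ← tsum_mul_left, ← (Sa.mul_left 3).tsum_sub Sb, ← tsum_div_const]
    exact tsum_congr fun k => by ring
  have hw := w_eq_v α v hv0 hv1 hv2 hrec
  have hshift : ∑' k : ℕ, (3 * cc α k - cc (3*α) k)/4 * x^(2*k+1)
      = ∑' n : ℕ, (α^3 * v n) * x^(2*n+3) := by
    rw [hfs.tsum_eq_zero_add]
    have h0 : (3 * cc α 0 - cc (3*α) 0)/4 * x^(2*0+1) = 0 := by
      rw [cc_zero, cc_zero]; ring
    rw [h0, zero_add]
    refine tsum_congr fun n => ?_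
    have hn := hw n
    have he : 2*(n+1)+1 = 2*n+3 := by omega
    rw [he]
    linear_combination (x^(2*n+3)/4) * hn
  have key : Real.sin (α * Real.arcsin x) ^ 3 = α ^ 3 * ∑' n : ℕ, v n * x ^ (2 * n + 3) := by
    rw [hsin3, hshift, ← tsum_mul_left]
    exact tsum_congr fun n => by ring
  have hsinF : Real.sin (α * Real.arcsin x)
      = α * x * hyperF ((1 + α) / 2) ((1 - α) / 2) (3 / 2) (x ^ 2) := by
    rw [S1, ← hyperF_eq α x]
  refine ⟨key, ?_⟩
  rw [← key, hsinF]
  ring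
end

section
/- Let a, b, c be real numbers with a > 0, b > 0, c > 0 and (c−a)(c−b) ≥ 0. Then the function x ↦ F(a,b;c;x)² / F(2a, 2b; 2c; x) is monotonically increasing on the interval (0,1). Moreover, F(a,b;c;x)² ≥ F(2a, 2b; 2c; x) for all x ∈ (0,1). -/
open scoped Nat

/-- coefficient of the hypergeometric series -/
noncomputable def Aseq (a b c : ℝ) (k : ℕ) : ℝ :=
  (ascPochhammer ℝ k).eval a * (ascPochhammer ℝ k).eval b /
    ((ascPochhammer ℝ k).eval c * (k ! : ℝ))

lemma poch_pos {y : ℝ} (hy : 0 < y) (k : ℕ) : 0 < (ascPochhammer ℝ k).eval y := by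
  induction k with
  | zero => simp [ascPochhammer_zero]
  | succ n ih =>
    rw [ascPochhammer_succ_right]
    simp only [Polynomial.eval_mul, Polynomial.eval_add, Polynomial.eval_X,
      Polynomial.eval_natCast]
    positivity

lemma Aseq_pos {a b c : ℝ} (ha : 0 < a) (hb : 0 < b) (hc : 0 < c) (k : ℕ) :
    0 < Aseq a b c k := by
  have := poch_pos ha k; have := poch_pos hb k; have := poch_pos hc k
  have : (0:ℝ) < k ! := by positivity
  unfold Aseq; positivity

lemma Aseq_zero (a b c : ℝ) : Aseq a b c 0 = 1 := by
  simp [Aseq, ascPochhammer_zero]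

lemma Aseq_succ {a b c : ℝ} (ha : 0 < a) (hb : 0 < b) (hc : 0 < c) (k : ℕ) :
    Aseq a b c (k + 1) = Aseq a b c k * ((a + k) * (b + k) / ((c + k) * (k + 1))) := by
  have h1 := (poch_pos hc k).ne'
  have h2 : ((k ! : ℝ)) ≠ 0 := by positivity
  have h3 : (c + k) ≠ 0 := by positivity
  have h4 : ((k:ℝ) + 1) ≠ 0 := by positivity
  unfold Aseq
  rw [ascPochhammer_succ_right]
  simp only [Polynomial.eval_mul, Polynomial.eval_add, Polynomial.eval_X,
    Polynomial.eval_natCast, Nat.factorial_succ, Nat.cast_mul, Nat.cast_add, Nat.cast_one]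
  field_simp

lemma Aseq_summable {a b c x : ℝ} (ha : 0 < a) (hb : 0 < b) (hc : 0 < c)
    (hx : 0 < x) (hx1 : x < 1) : Summable (fun k : ℕ => Aseq a b c k * x ^ k) := by
  apply summable_of_ratio_test_tendsto_lt_one hx1
  · filter_upwards with k
    have := Aseq_pos ha hb hc k
    positivity
  · have key : ∀ k : ℕ, ‖Aseq a b c (k+1) * x ^ (k+1)‖ / ‖Aseq a b c k * x ^ k‖ =
        x * ((a + k) / ((k:ℝ) + 1) * ((b + k) / (c + k))) := by
      intro k
      have hA := Aseq_pos ha hb hc k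
      have hA1 := Aseq_pos ha hb hc (k+1)
      have hxk : (0:ℝ) < x ^ k := by positivity
      rw [Real.norm_eq_abs, Real.norm_eq_abs, abs_of_pos (by positivity),
        abs_of_pos (by positivity), Aseq_succ ha hb hc k, pow_succ]
      have h3 : (c + (k:ℝ)) ≠ 0 := by positivity
      have h4 : ((k:ℝ) + 1) ≠ 0 := by positivity
      field_simp
    simp only [key]
    have hend : Filter.Tendsto (fun k : ℕ => (a + k) / ((k:ℝ) + 1) * ((b + k) / (c + k)))
        Filter.atTop (nhds 1) := by
      have t1 : Filter.Tendsto (fun k : ℕ => (a + k) / ((k:ℝ) + 1)) Filter.atTop (nhds 1) := by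
        have : (fun k : ℕ => (a + (k:ℝ)) / ((k:ℝ) + 1)) =
            fun k : ℕ => (a - 1) * (1 / ((k:ℝ) + 1)) + 1 := by
          funext k
          have : ((k:ℝ) + 1) ≠ 0 := by positivity
          field_simp
          ring
        rw [this]
        have := tendsto_one_div_add_atTop_nhds_zero_nat (𝕜 := ℝ)
        simpa using (this.const_mul (a - 1)).add_const 1
      have t2 : Filter.Tendsto (fun k : ℕ => (b + k) / ((c:ℝ) + k)) Filter.atTop (nhds 1) := by
        have hc2 : Filter.Tendsto (fun k : ℕ => (c:ℝ) + k) Filter.atTop Filter.atTop :=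
          Filter.tendsto_atTop_add_const_left _ c tendsto_natCast_atTop_atTop
        have hinv : Filter.Tendsto (fun k : ℕ => 1 / ((c:ℝ) + k)) Filter.atTop (nhds 0) := by
          simp only [one_div]; exact hc2.inv_tendsto_atTop
        have : (fun k : ℕ => (b + (k:ℝ)) / ((c:ℝ) + k)) =
            fun k : ℕ => (b - c) * (1 / ((c:ℝ) + k)) + 1 := by
          funext k
          have : ((c:ℝ) + k) ≠ 0 := by positivity
          field_simp
          ring
        rw [this]
        simpa using (hinv.const_mul (b - c)).add_const 1
      simpa using t1.mul t2
    simpa using hend.const_mul x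

/-- the Cauchy-product coefficient of `F(a,b;c;x)^2` -/
noncomputable def hseq (a b c : ℝ) (n : ℕ) : ℝ :=
  ∑ i ∈ Finset.range (n + 1), Aseq a b c i * Aseq a b c (n - i)

lemma hseq_pos {a b c : ℝ} (ha : 0 < a) (hb : 0 < b) (hc : 0 < c) (n : ℕ) :
    0 < hseq a b c n :=
  Finset.sum_pos (fun i _ => mul_pos (Aseq_pos ha hb hc i) (Aseq_pos ha hb hc _))
    ⟨0, by simp⟩

lemma hseq_zero (a b c : ℝ) : hseq a b c 0 = 1 := by
  simp [hseq, Aseq_zero]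

/-- pointwise algebraic identity -/
lemma pointwise_id {a b c s t : ℝ} (hcs : c + s ≠ 0) (hct : c + t ≠ 0) :
    (2*c + (s+t)) * ((a+s)*(b+s)/(c+s) + (a+t)*(b+t)/(c+t)) - (2*a+(s+t))*(2*b+(s+t))
      = (c-a)*(c-b)*(s-t)^2 / ((c+s)*(c+t)) := by
  field_simp
  ring

noncomputable def phi (a b c : ℝ) (i : ℕ) : ℝ := (a + i) * (b + i) / (c + i)

lemma key_identity {a b c : ℝ} (ha : 0 < a) (hb : 0 < b) (hc : 0 < c) (n : ℕ) :
    ((n:ℝ) + 1) * hseq a b c (n + 1) =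
      ∑ i ∈ Finset.range (n + 1),
        (phi a b c i + phi a b c (n - i)) * (Aseq a b c i * Aseq a b c (n - i)) := by
  have refl1 : ∀ (f : ℕ → ℝ) (m : ℕ),
      ∑ i ∈ Finset.range (m + 1), f i = ∑ i ∈ Finset.range (m + 1), f (m - i) := by
    intro f m
    exact (Finset.sum_range_reflect f (m+1)).symm
  -- step 1 : (n+1) * h(n+1) = 2 * ∑_{i<n+2} i * A_i A_{n+1-i}
  have step1 : ((n:ℝ) + 1) * hseq a b c (n + 1) =
      2 * ∑ i ∈ Finset.range (n + 2), (i:ℝ) * (Aseq a b c i * Aseq a b c (n + 1 - i)) := by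
    have e1 : ((n:ℝ) + 1) * hseq a b c (n + 1) =
        ∑ i ∈ Finset.range (n + 2), ((n:ℝ) + 1) * (Aseq a b c i * Aseq a b c (n + 1 - i)) := by
      rw [hseq, Finset.mul_sum]
    rw [e1]
    have e2 : ∀ i ∈ Finset.range (n + 2),
        ((n:ℝ) + 1) * (Aseq a b c i * Aseq a b c (n + 1 - i)) =
        (i:ℝ) * (Aseq a b c i * Aseq a b c (n + 1 - i)) +
          ((n + 1 - i : ℕ):ℝ) * (Aseq a b c i * Aseq a b c (n + 1 - i)) := by
      intro i hi
      simp only [Finset.mem_range] at hi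
      have hi' : i ≤ n + 1 := by omega
      have : ((n + 1 - i : ℕ):ℝ) = (n:ℝ) + 1 - (i:ℝ) := by
        push_cast [Nat.cast_sub hi']; ring
      rw [this]; ring
    rw [Finset.sum_congr rfl e2, Finset.sum_add_distrib]
    have e3 : ∑ i ∈ Finset.range (n + 2),
        ((n + 1 - i : ℕ):ℝ) * (Aseq a b c i * Aseq a b c (n + 1 - i)) =
        ∑ i ∈ Finset.range (n + 2), (i:ℝ) * (Aseq a b c i * Aseq a b c (n + 1 - i)) := by
      rw [refl1 (fun i => (i:ℝ) * (Aseq a b c i * Aseq a b c (n + 1 - i))) (n+1)]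
      apply Finset.sum_congr rfl
      intro i hi
      simp only [Finset.mem_range] at hi
      have hi' : i ≤ n + 1 := by omega
      rw [Nat.sub_sub_self hi']
      ring
    rw [e3]; ring
  rw [step1]
  -- step 2 : shift index
  have step2 : ∑ i ∈ Finset.range (n + 2), (i:ℝ) * (Aseq a b c i * Aseq a b c (n + 1 - i)) =
      ∑ i ∈ Finset.range (n + 1), phi a b c i * (Aseq a b c i * Aseq a b c (n - i)) := by
    rw [Finset.sum_range_succ' (fun i => (i:ℝ) * (Aseq a b c i * Aseq a b c (n + 1 - i))) (n+1)]
    simp only [Nat.cast_zero, zero_mul, add_zero]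
    apply Finset.sum_congr rfl
    intro i hi
    have : n + 1 - (i + 1) = n - i := by omega
    rw [this, Aseq_succ ha hb hc i]
    have h3 : (c + (i:ℝ)) ≠ 0 := by positivity
    have h4 : ((i:ℝ) + 1) ≠ 0 := by positivity
    unfold phi
    push_cast
    field_simp
  rw [step2]
  -- step 3 : symmetrize
  have step3 : ∑ i ∈ Finset.range (n + 1), phi a b c (n-i) * (Aseq a b c i * Aseq a b c (n - i)) =
      ∑ i ∈ Finset.range (n + 1), phi a b c i * (Aseq a b c i * Aseq a b c (n - i)) := by
    rw [refl1 (fun i => phi a b c i * (Aseq a b c i * Aseq a b c (n - i))) n]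
    apply Finset.sum_congr rfl
    intro i hi
    simp only [Finset.mem_range] at hi
    have hi' : i ≤ n := by omega
    rw [Nat.sub_sub_self hi']
    ring
  rw [Finset.sum_congr rfl (fun i _ => add_mul (phi a b c i) (phi a b c (n-i))
    (Aseq a b c i * Aseq a b c (n - i))), Finset.sum_add_distrib, step3]
  ring

lemma step_ineq {a b c : ℝ} (ha : 0 < a) (hb : 0 < b) (hc : 0 < c)
    (habc : 0 ≤ (c - a) * (c - b)) (n : ℕ) :
    (2*a + n) * (2*b + n) * hseq a b c n ≤
      (2*c + n) * (((n:ℝ) + 1) * hseq a b c (n + 1)) := by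
  rw [key_identity ha hb hc n, hseq, Finset.mul_sum, Finset.mul_sum]
  apply Finset.sum_le_sum
  intro i hi
  simp only [Finset.mem_range] at hi
  have hi' : i ≤ n := by omega
  have hcast : ((n - i : ℕ):ℝ) = (n:ℝ) - (i:ℝ) := by
    push_cast [Nat.cast_sub hi']; ring
  have hA : 0 < Aseq a b c i * Aseq a b c (n - i) :=
    mul_pos (Aseq_pos ha hb hc i) (Aseq_pos ha hb hc _)
  set s : ℝ := (i:ℝ)
  set t : ℝ := ((n - i : ℕ):ℝ)
  have hst : s + t = (n:ℝ) := by rw [hcast]; ring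
  have hcs : c + s ≠ 0 := by positivity
  have hct : c + t ≠ 0 := by positivity
  have hE : (2*a+(s+t))*(2*b+(s+t)) ≤ (2*c + (s+t)) * (phi a b c i + phi a b c (n-i)) := by
    have := pointwise_id (a := a) (b := b) hcs hct
    have hpos : 0 ≤ (c-a)*(c-b)*(s-t)^2 / ((c+s)*(c+t)) := by
      have h1 : 0 < c + s := by positivity
      have h2 : 0 < c + t := by positivity
      have : 0 ≤ (c-a)*(c-b)*(s-t)^2 := by positivity
      positivity
    have hphi : phi a b c i = (a+s)*(b+s)/(c+s) := rfl
    have hphit : phi a b c (n-i) = (a+t)*(b+t)/(c+t) := rfl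
    rw [hphi, hphit]
    linarith [this, hpos]
  calc (2*a + n) * (2*b + n) * (Aseq a b c i * Aseq a b c (n - i))
      = (2*a+(s+t))*(2*b+(s+t)) * (Aseq a b c i * Aseq a b c (n - i)) := by rw [hst]
    _ ≤ (2*c + (s+t)) * (phi a b c i + phi a b c (n-i)) *
          (Aseq a b c i * Aseq a b c (n - i)) := by
        exact mul_le_mul_of_nonneg_right hE hA.le
    _ = (2*c + n) * ((phi a b c i + phi a b c (n-i)) *
          (Aseq a b c i * Aseq a b c (n - i))) := by rw [hst]; ring

lemma ratio_step {a b c : ℝ} (ha : 0 < a) (hb : 0 < b) (hc : 0 < c)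
    (habc : 0 ≤ (c - a) * (c - b)) (n : ℕ) :
    hseq a b c n * Aseq (2*a) (2*b) (2*c) (n+1) ≤
      hseq a b c (n+1) * Aseq (2*a) (2*b) (2*c) n := by
  have ha2 : 0 < 2*a := by linarith
  have hb2 : 0 < 2*b := by linarith
  have hc2 : 0 < 2*c := by linarith
  have hB := Aseq_pos ha2 hb2 hc2 n
  have hrec := Aseq_succ ha2 hb2 hc2 n
  have hstep := step_ineq ha hb hc habc n
  have hd : (0:ℝ) < (2*c + n) * ((n:ℝ) + 1) := by positivity
  rw [hrec]
  -- rewrite goal : h_n * (B_n * ((2a+n)(2b+n)/((2c+n)(n+1)))) ≤ h_{n+1} * B_n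
  have h1 : hseq a b c n * (Aseq (2*a) (2*b) (2*c) n *
      ((2*a + n) * (2*b + n) / ((2*c + n) * ((n:ℝ) + 1)))) =
      Aseq (2*a) (2*b) (2*c) n * ((2*a + n) * (2*b + n) * hseq a b c n) /
        ((2*c + n) * ((n:ℝ) + 1)) := by ring
  rw [h1, div_le_iff₀ hd]
  calc Aseq (2*a) (2*b) (2*c) n * ((2*a + n) * (2*b + n) * hseq a b c n)
      ≤ Aseq (2*a) (2*b) (2*c) n * ((2*c + n) * (((n:ℝ) + 1) * hseq a b c (n + 1))) :=
        mul_le_mul_of_nonneg_left hstep hB.le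
    _ = hseq a b c (n + 1) * Aseq (2*a) (2*b) (2*c) n * ((2*c + n) * ((n:ℝ) + 1)) := by ring

lemma cross_ineq {a b c : ℝ} (ha : 0 < a) (hb : 0 < b) (hc : 0 < c)
    (habc : 0 ≤ (c - a) * (c - b)) {n m : ℕ} (hnm : n ≤ m) :
    hseq a b c n * Aseq (2*a) (2*b) (2*c) m ≤
      hseq a b c m * Aseq (2*a) (2*b) (2*c) n := by
  have ha2 : 0 < 2*a := by linarith
  have hb2 : 0 < 2*b := by linarith
  have hc2 : 0 < 2*c := by linarith
  obtain ⟨k, rfl⟩ := Nat.exists_eq_add_of_le hnm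
  induction k with
  | zero => simp
  | succ k ih =>
    have step := ratio_step ha hb hc habc (n + k)
    have hBk := Aseq_pos ha2 hb2 hc2 (n + k)
    have hBk1 := Aseq_pos ha2 hb2 hc2 (n + k + 1)
    have hBn := Aseq_pos ha2 hb2 hc2 n
    have ih' := ih (by omega)
    have e : n + (k + 1) = (n + k) + 1 := by omega
    rw [e]
    -- h_n B_{nk+1} B_{nk} ≤ h_{nk} B_n B_{nk+1} ≤ h_{nk+1} B_{nk} B_n
    have c1 : hseq a b c n * Aseq (2*a) (2*b) (2*c) ((n+k)+1) * Aseq (2*a) (2*b) (2*c) (n+k)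
        ≤ hseq a b c (n+k) * Aseq (2*a) (2*b) (2*c) n * Aseq (2*a) (2*b) (2*c) ((n+k)+1) := by
      have := mul_le_mul_of_nonneg_right ih' hBk1.le
      calc hseq a b c n * Aseq (2*a) (2*b) (2*c) ((n+k)+1) * Aseq (2*a) (2*b) (2*c) (n+k)
          = hseq a b c n * Aseq (2*a) (2*b) (2*c) (n+k) * Aseq (2*a) (2*b) (2*c) ((n+k)+1) := by
            ring
        _ ≤ hseq a b c (n+k) * Aseq (2*a) (2*b) (2*c) n * Aseq (2*a) (2*b) (2*c) ((n+k)+1) :=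
            this
    have c2 : hseq a b c (n+k) * Aseq (2*a) (2*b) (2*c) n * Aseq (2*a) (2*b) (2*c) ((n+k)+1)
        ≤ hseq a b c ((n+k)+1) * Aseq (2*a) (2*b) (2*c) (n+k) * Aseq (2*a) (2*b) (2*c) n := by
      have := mul_le_mul_of_nonneg_right step hBn.le
      calc hseq a b c (n+k) * Aseq (2*a) (2*b) (2*c) n * Aseq (2*a) (2*b) (2*c) ((n+k)+1)
          = hseq a b c (n+k) * Aseq (2*a) (2*b) (2*c) ((n+k)+1) * Aseq (2*a) (2*b) (2*c) n := by
            ring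
        _ ≤ hseq a b c ((n+k)+1) * Aseq (2*a) (2*b) (2*c) (n+k) * Aseq (2*a) (2*b) (2*c) n :=
            this
    have := le_trans c1 c2
    have goal' : hseq a b c n * Aseq (2*a) (2*b) (2*c) ((n+k)+1) * Aseq (2*a) (2*b) (2*c) (n+k)
        ≤ hseq a b c ((n+k)+1) * Aseq (2*a) (2*b) (2*c) n * Aseq (2*a) (2*b) (2*c) (n+k) := by
      calc hseq a b c n * Aseq (2*a) (2*b) (2*c) ((n+k)+1) * Aseq (2*a) (2*b) (2*c) (n+k)
          ≤ hseq a b c ((n+k)+1) * Aseq (2*a) (2*b) (2*c) (n+k) * Aseq (2*a) (2*b) (2*c) n :=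
            this
        _ = hseq a b c ((n+k)+1) * Aseq (2*a) (2*b) (2*c) n * Aseq (2*a) (2*b) (2*c) (n+k) := by
            ring
    exact le_of_mul_le_mul_right goal' hBk

lemma B_le_hseq {a b c : ℝ} (ha : 0 < a) (hb : 0 < b) (hc : 0 < c)
    (habc : 0 ≤ (c - a) * (c - b)) (m : ℕ) :
    Aseq (2*a) (2*b) (2*c) m ≤ hseq a b c m := by
  have := cross_ineq ha hb hc habc (Nat.zero_le m)
  simpa [hseq_zero, Aseq_zero] using this

lemma Aseq_norm_summable {a b c x : ℝ} (ha : 0 < a) (hb : 0 < b) (hc : 0 < c)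
    (hx : 0 < x) (hx1 : x < 1) : Summable (fun k : ℕ => ‖Aseq a b c k * x ^ k‖) := by
  have := Aseq_summable ha hb hc hx hx1
  refine this.congr fun k => ?_
  rw [Real.norm_eq_abs, abs_of_nonneg]
  have := Aseq_pos ha hb hc k
  positivity

lemma antidiag_eq {a b c x : ℝ} (n : ℕ) :
    ∑ kl ∈ Finset.HasAntidiagonal.antidiagonal n, (Aseq a b c kl.1 * x ^ kl.1) * (Aseq a b c kl.2 * x ^ kl.2)
      = hseq a b c n * x ^ n := by
  rw [Finset.Nat.sum_antidiagonal_eq_sum_range_succ_mk]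
  rw [hseq, Finset.sum_mul]
  apply Finset.sum_congr rfl
  intro i hi
  simp only [Finset.mem_range] at hi
  have hi' : i ≤ n := by omega
  have : x ^ i * x ^ (n - i) = x ^ n := by
    rw [← pow_add, Nat.add_sub_cancel' hi']
  calc (Aseq a b c i * x ^ i) * (Aseq a b c (n-i) * x ^ (n-i))
      = Aseq a b c i * Aseq a b c (n-i) * (x ^ i * x ^ (n-i)) := by ring
    _ = Aseq a b c i * Aseq a b c (n-i) * x ^ n := by rw [this]

lemma sq_eq_tsum {a b c x : ℝ} (ha : 0 < a) (hb : 0 < b) (hc : 0 < c)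
    (hx : 0 < x) (hx1 : x < 1) :
    hyperF a b c x ^ 2 = ∑' n : ℕ, hseq a b c n * x ^ n := by
  have hs := Aseq_norm_summable ha hb hc hx hx1
  have : hyperF a b c x = ∑' k : ℕ, Aseq a b c k * x ^ k := rfl
  rw [this, sq, tsum_mul_tsum_eq_tsum_sum_antidiagonal_of_summable_norm hs hs]
  exact tsum_congr fun n => antidiag_eq n

lemma hseq_summable {a b c x : ℝ} (ha : 0 < a) (hb : 0 < b) (hc : 0 < c)
    (hx : 0 < x) (hx1 : x < 1) :
    Summable (fun n : ℕ => hseq a b c n * x ^ n) := by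
  have hs := Aseq_norm_summable ha hb hc hx hx1
  have h := (summable_norm_sum_mul_antidiagonal_of_summable_norm hs hs).of_norm
  exact h.congr fun n => antidiag_eq n

lemma hyperF_pos {a b c x : ℝ} (ha : 0 < a) (hb : 0 < b) (hc : 0 < c)
    (hx : 0 < x) (hx1 : x < 1) : 0 < hyperF a b c x := by
  have hs := Aseq_summable ha hb hc hx hx1
  have : hyperF a b c x = ∑' k : ℕ, Aseq a b c k * x ^ k := rfl
  rw [this]
  refine Summable.tsum_pos hs (fun k => ?_) 0 ?_
  · have := Aseq_pos ha hb hc k; positivity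
  · simp [Aseq_zero]

lemma pow_cross {x y : ℝ} (hx : 0 ≤ x) (hxy : x ≤ y) {n m : ℕ} (hnm : n ≤ m) :
    x ^ m * y ^ n ≤ y ^ m * x ^ n := by
  obtain ⟨k, rfl⟩ := Nat.exists_eq_add_of_le hnm
  have hy : 0 ≤ y := le_trans hx hxy
  have hk : x ^ k ≤ y ^ k := pow_le_pow_left₀ hx hxy k
  calc x ^ (n + k) * y ^ n = (x ^ n * y ^ n) * x ^ k := by rw [pow_add]; ring
    _ ≤ (x ^ n * y ^ n) * y ^ k := by
        apply mul_le_mul_of_nonneg_left hk; positivity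
    _ = y ^ (n + k) * x ^ n := by rw [pow_add]; ring

lemma pair_ineq {a b c x y : ℝ} (ha : 0 < a) (hb : 0 < b) (hc : 0 < c)
    (habc : 0 ≤ (c - a) * (c - b)) (hx : 0 < x) (hxy : x ≤ y) (m n : ℕ) :
    hseq a b c m * x ^ m * (Aseq (2*a) (2*b) (2*c) n * y ^ n) +
      hseq a b c n * x ^ n * (Aseq (2*a) (2*b) (2*c) m * y ^ m) ≤
    hseq a b c m * y ^ m * (Aseq (2*a) (2*b) (2*c) n * x ^ n) +
      hseq a b c n * y ^ n * (Aseq (2*a) (2*b) (2*c) m * x ^ m) := by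
  have key : ∀ m n : ℕ, n ≤ m →
      hseq a b c m * x ^ m * (Aseq (2*a) (2*b) (2*c) n * y ^ n) +
        hseq a b c n * x ^ n * (Aseq (2*a) (2*b) (2*c) m * y ^ m) ≤
      hseq a b c m * y ^ m * (Aseq (2*a) (2*b) (2*c) n * x ^ n) +
        hseq a b c n * y ^ n * (Aseq (2*a) (2*b) (2*c) m * x ^ m) := by
    intro m n hnm
    have hD : hseq a b c n * Aseq (2*a) (2*b) (2*c) m ≤
        hseq a b c m * Aseq (2*a) (2*b) (2*c) n := cross_ineq ha hb hc habc hnm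
    have hp : x ^ m * y ^ n ≤ y ^ m * x ^ n := pow_cross hx.le hxy hnm
    nlinarith [hD, hp, mul_nonneg (hseq_pos ha hb hc n).le
        (Aseq_pos (by linarith : (0:ℝ) < 2*a) (by linarith : (0:ℝ) < 2*b)
          (by linarith : (0:ℝ) < 2*c) m).le]
  rcases le_total n m with h | h
  · exact key m n h
  · have := key n m h
    linarith

set_option maxHeartbeats 1000000 in
lemma generic_cross {h B : ℕ → ℝ} {x y : ℝ}
    (hhx : Summable fun n : ℕ => ‖h n * x ^ n‖)
    (hhy : Summable fun n : ℕ => ‖h n * y ^ n‖)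
    (hBx : Summable fun n : ℕ => ‖B n * x ^ n‖)
    (hBy : Summable fun n : ℕ => ‖B n * y ^ n‖)
    (hpair : ∀ p : ℕ × ℕ,
      h p.1 * x ^ p.1 * (B p.2 * y ^ p.2) + h p.2 * x ^ p.2 * (B p.1 * y ^ p.1) ≤
      h p.1 * y ^ p.1 * (B p.2 * x ^ p.2) + h p.2 * y ^ p.2 * (B p.1 * x ^ p.1)) :
    (∑' n : ℕ, h n * x ^ n) * (∑' n : ℕ, B n * y ^ n) ≤
      (∑' n : ℕ, h n * y ^ n) * (∑' n : ℕ, B n * x ^ n) := by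
  have hSu : Summable (fun p : ℕ × ℕ => h p.1 * x ^ p.1 * (B p.2 * y ^ p.2)) :=
    summable_mul_of_summable_norm (f := fun n : ℕ => h n * x ^ n) (g := fun n : ℕ => B n * y ^ n) hhx hBy
  have hSv : Summable (fun p : ℕ × ℕ => h p.1 * y ^ p.1 * (B p.2 * x ^ p.2)) :=
    summable_mul_of_summable_norm (f := fun n : ℕ => h n * y ^ n) (g := fun n : ℕ => B n * x ^ n) hhy hBx
  rw [tsum_mul_tsum_of_summable_norm (f := fun n : ℕ => h n * x ^ n) (g := fun n : ℕ => B n * y ^ n) hhx hBy, tsum_mul_tsum_of_summable_norm (f := fun n : ℕ => h n * y ^ n) (g := fun n : ℕ => B n * x ^ n) hhy hBx]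
  have hSu' : Summable (fun p : ℕ × ℕ => h p.2 * x ^ p.2 * (B p.1 * y ^ p.1)) :=
    (Equiv.prodComm ℕ ℕ).summable_iff.mpr hSu
  have hSv' : Summable (fun p : ℕ × ℕ => h p.2 * y ^ p.2 * (B p.1 * x ^ p.1)) :=
    (Equiv.prodComm ℕ ℕ).summable_iff.mpr hSv
  have hswapu : ∑' p : ℕ × ℕ, h p.2 * x ^ p.2 * (B p.1 * y ^ p.1) =
      ∑' p : ℕ × ℕ, h p.1 * x ^ p.1 * (B p.2 * y ^ p.2) :=
    (Equiv.prodComm ℕ ℕ).tsum_eq fun p => h p.1 * x ^ p.1 * (B p.2 * y ^ p.2)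
  have hswapv : ∑' p : ℕ × ℕ, h p.2 * y ^ p.2 * (B p.1 * x ^ p.1) =
      ∑' p : ℕ × ℕ, h p.1 * y ^ p.1 * (B p.2 * x ^ p.2) :=
    (Equiv.prodComm ℕ ℕ).tsum_eq fun p => h p.1 * y ^ p.1 * (B p.2 * x ^ p.2)
  have hmain : ∑' p : ℕ × ℕ, (h p.1 * x ^ p.1 * (B p.2 * y ^ p.2) +
        h p.2 * x ^ p.2 * (B p.1 * y ^ p.1)) ≤
      ∑' p : ℕ × ℕ, (h p.1 * y ^ p.1 * (B p.2 * x ^ p.2) +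
        h p.2 * y ^ p.2 * (B p.1 * x ^ p.1)) :=
    Summable.tsum_le_tsum hpair (hSu.add hSu') (hSv.add hSv')
  rw [Summable.tsum_add hSu hSu', Summable.tsum_add hSv hSv', hswapu, hswapv] at hmain
  linarith

theorem monotone_sq_hyperF_div_hyperF
    (a b c : ℝ) (ha : 0 < a) (hb : 0 < b) (hc : 0 < c)
    (habc : 0 ≤ (c - a) * (c - b)) :
    MonotoneOn (fun x : ℝ => (hyperF a b c x) ^ 2 / hyperF (2 * a) (2 * b) (2 * c) x)
      (Set.Ioo 0 1) ∧
    ∀ x ∈ Set.Ioo (0 : ℝ) 1,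
      hyperF (2 * a) (2 * b) (2 * c) x ≤ (hyperF a b c x) ^ 2 := by
  have ha2 : 0 < 2*a := by linarith
  have hb2 : 0 < 2*b := by linarith
  have hc2 : 0 < 2*c := by linarith
  have hGeq : ∀ x : ℝ, hyperF (2*a) (2*b) (2*c) x = ∑' n : ℕ, Aseq (2*a) (2*b) (2*c) n * x ^ n :=
    fun x => rfl
  constructor
  · intro x hx y hy hxy
    obtain ⟨hx0, hx1⟩ := hx
    obtain ⟨hy0, hy1⟩ := hy
    have hGx := hyperF_pos ha2 hb2 hc2 hx0 hx1
    have hGy := hyperF_pos ha2 hb2 hc2 hy0 hy1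
    simp only
    rw [div_le_div_iff₀ hGx hGy]
    have hnx : Summable (fun n : ℕ => ‖hseq a b c n * x ^ n‖) := by
      refine (hseq_summable ha hb hc hx0 hx1).congr fun n => ?_
      rw [Real.norm_eq_abs, abs_of_nonneg]
      have := hseq_pos ha hb hc n; positivity
    have hny : Summable (fun n : ℕ => ‖hseq a b c n * y ^ n‖) := by
      refine (hseq_summable ha hb hc hy0 hy1).congr fun n => ?_
      rw [Real.norm_eq_abs, abs_of_nonneg]
      have := hseq_pos ha hb hc n; positivity
    have hnBx := Aseq_norm_summable ha2 hb2 hc2 hx0 hx1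
    have hnBy := Aseq_norm_summable ha2 hb2 hc2 hy0 hy1
    rw [sq_eq_tsum ha hb hc hx0 hx1, sq_eq_tsum ha hb hc hy0 hy1, hGeq x, hGeq y]
    exact generic_cross hnx hny hnBx hnBy
      (fun p => pair_ineq ha hb hc habc hx0 hxy p.1 p.2)
  · intro x hx
    obtain ⟨hx0, hx1⟩ := hx
    rw [sq_eq_tsum ha hb hc hx0 hx1, hGeq x]
    apply Summable.tsum_le_tsum _ (Aseq_summable ha2 hb2 hc2 hx0 hx1) (hseq_summable ha hb hc hx0 hx1)
    intro n
    apply mul_le_mul_of_nonneg_right (B_le_hseq ha hb hc habc n)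
    positivity
end
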